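/- arXiv:1112.0132 — 15 statements merged into one kernel-verified Lean document; each statement's English description precedes it below -/
import Mathlib

section
/- A domain D is sharp if and only if for every two nonzero ideals I, H of D, one has I = (I : (I : H)) · (I : H). -/
/-!
Colon ideals are residuals: `A * B ≤ I ↔ A ≤ I : B`. Hence in any factorisation `I = A' * B'`
with `A' ⊇ I : H` and `B' ⊇ H`, the factor `A'` is squeezed to `I : H`, and then `B'` lies in
`I : (I : H)`; since `(I : (I : H)) * (I : H) ≤ I` always holds, the factorisation given by
sharpness for `I ⊇ (I : H) * H` forces the equality. Conversely `I ⊇ A * B` gives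
`A ≤ I : B` and `B ≤ I : (I : B)`.
-/

/-- A domain `R` is *sharp* if whenever `I ⊇ A*B` with `I, A, B` nonzero ideals,
there exist ideals `A' ⊇ A` and `B' ⊇ B` such that `I = A'*B'`. -/
def IsSharpDomain (R : Type*) [CommRing R] : Prop :=
  ∀ I A B : Ideal R, I ≠ ⊥ → A ≠ ⊥ → B ≠ ⊥ → A * B ≤ I →
    ∃ A' B' : Ideal R, A ≤ A' ∧ B ≤ B' ∧ I = A' * B'

namespace Ideal

variable {R : Type*} [CommSemiring R] {I A B H : Ideal R}

theorem le_colon_iff_mul_le : A ≤ I.colon B ↔ A * B ≤ I := by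
  rw [mul_le]
  simp only [SetLike.le_def, Submodule.mem_colon, smul_eq_mul, SetLike.mem_coe]

theorem colon_mul_le (I B : Ideal R) : I.colon B * B ≤ I :=
  le_colon_iff_mul_le.1 le_rfl

theorem le_colon_colon (I B : Ideal R) : B ≤ I.colon (I.colon B) :=
  le_colon_iff_mul_le.2 ((mul_comm B _).trans_le (colon_mul_le I B))

theorem colon_ne_bot (hI : I ≠ ⊥) (H : Ideal R) : I.colon H ≠ ⊥ :=
  fun h ↦ hI (le_bot_iff.1 (h ▸ le_colon))

theorem eq_colon_colon_mul_colon_of_eq_mul (hI : I = A * B) (hA : I.colon H ≤ A) (hB : H ≤ B) :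
    I = I.colon (I.colon H) * I.colon H := by
  have hA_eq : A = I.colon H :=
    le_antisymm (le_colon_iff_mul_le.2 (hI ▸ mul_mono_right hB)) hA
  have hB_le : B ≤ I.colon (I.colon H) :=
    le_colon_iff_mul_le.2 (by rw [mul_comm, ← hA_eq, ← hI])
  refine le_antisymm ?_ (colon_mul_le I _)
  calc I = I.colon H * B := hA_eq ▸ hI
    _ ≤ I.colon H * I.colon (I.colon H) := mul_mono_right hB_le
    _ = I.colon (I.colon H) * I.colon H := mul_comm _ _

end Ideal

theorem sharp_iff_colon_general (R : Type*) [CommRing R] :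
    IsSharpDomain R ↔
      ∀ I H : Ideal R, I ≠ ⊥ → H ≠ ⊥ →
        I = (I.colon (I.colon H)) * (I.colon H) := by
  constructor
  · intro hsharp I H hI hH
    obtain ⟨A, B, hA, hB, hIAB⟩ :=
      hsharp I (I.colon H) H hI (Ideal.colon_ne_bot hI H) hH (Ideal.colon_mul_le I H)
    exact Ideal.eq_colon_colon_mul_colon_of_eq_mul hIAB hA hB
  · intro hcolon I A B hI _ hB hAB
    exact ⟨I.colon B, I.colon (I.colon B), Ideal.le_colon_iff_mul_le.2 hAB,
      Ideal.le_colon_colon I B, (hcolon I B hI hB).trans (mul_comm _ _)⟩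

theorem sharp_iff_colon (R : Type*) [CommRing R] [IsDomain R] :
    IsSharpDomain R ↔
      ∀ I H : Ideal R, I ≠ ⊥ → H ≠ ⊥ →
        I = (I.colon (I.colon H)) * (I.colon H) :=
  sharp_iff_colon_general R
end

section
/- If D is a sharp domain, then D is a pseudo-Dedekind domain, i.e., the v-closure of every nonzero ideal of D is invertible. -/
/-- A domain is *pseudo-Dedekind* if the `v`-closure `(I⁻¹)⁻¹` of every nonzero
ideal `I` is invertible (as a fractional ideal). -/
def IsPseudoDedekind (R : Type*) [CommRing R] [IsDomain R] : Prop :=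
  ∀ I : Ideal R, I ≠ ⊥ →
    IsUnit (((I : FractionalIdeal (nonZeroDivisors R) (FractionRing R))⁻¹)⁻¹)

/-! Pick `0 ≠ a ∈ I`. The ideal `B = a I⁻¹` is integral and `I B ⊆ (a)`, so sharpness gives
`(a) = A B'` with `I ⊆ A` and `B ⊆ B'`. As a factor of a principal ideal, `A` is invertible, and
`a I⁻¹ A = B A ⊆ B' A = (a)` gives `I⁻¹ ⊆ A⁻¹`; since also `A⁻¹ ⊆ I⁻¹`, the `v`-closure of `I`
is `A`. -/

open scoped nonZeroDivisors

namespace FractionalIdeal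

variable {R K : Type*} [CommRing R] [IsDomain R] [Field K] [Algebra R K] [IsFractionRing R K]

theorem spanSingleton_mul_inv_le_one {J : FractionalIdeal R⁰ K} {x : K} (hx : x ∈ J) :
    spanSingleton R⁰ x * J⁻¹ ≤ 1 :=
  (mul_le_mul_left (spanSingleton_le_iff_mem.2 hx) _).trans mul_one_div_le_one

theorem one_le_inv_of_le_one {J : FractionalIdeal R⁰ K} (hJ0 : J ≠ 0) (hJ : J ≤ 1) : 1 ≤ J⁻¹ :=
  (le_div_iff_mul_le hJ0).2 (by rwa [one_mul])

theorem isUnit_spanSingleton {x : K} (hx : x ≠ 0) : IsUnit (spanSingleton R⁰ x) :=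
  (mul_inv_cancel_iff_isUnit K).1 (spanSingleton_mul_inv K hx)

theorem inv_inv_of_isUnit {A : FractionalIdeal R⁰ K} (hA : IsUnit A) : A⁻¹⁻¹ = A :=
  (right_inverse_eq K _ _ (by rw [mul_comm, (mul_inv_cancel_iff_isUnit K).2 hA])).symm

theorem inv_inv_eq_of_le_of_inv_mul_le_one {I A : FractionalIdeal R⁰ K} (hI : I ≠ 0)
    (hA : IsUnit A) (hIA : I ≤ A) (hA_inv : I⁻¹ * A ≤ 1) : I⁻¹⁻¹ = A := by
  have hA0 : A ≠ 0 := hA.ne_zero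
  have hinv : I⁻¹ = A⁻¹ := le_antisymm ((le_div_iff_mul_le hA0).2 hA_inv) (inv_anti_mono hI hA0 hIA)
  rw [hinv, inv_inv_of_isUnit hA]

end FractionalIdeal

open FractionalIdeal in
theorem IsSharpDomain.exists_le_isUnit_inv_mul_le_one {R : Type*} (K : Type*) [CommRing R]
    [IsDomain R] [Field K] [Algebra R K] [IsFractionRing R K] (h : IsSharpDomain R)
    {I : Ideal R} (hI : I ≠ ⊥) :
    ∃ A : Ideal R, I ≤ A ∧ IsUnit (A : FractionalIdeal R⁰ K) ∧
      (I : FractionalIdeal R⁰ K)⁻¹ * A ≤ 1 := by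
  obtain ⟨a, haI, ha⟩ := Submodule.exists_mem_ne_zero_of_ne_bot hI
  set J : FractionalIdeal R⁰ K := ↑I
  set x := algebraMap R K a
  have hJ0 : J ≠ 0 := coeIdeal_ne_zero.2 hI
  have hx : x ≠ 0 := (map_ne_zero_iff _ (IsFractionRing.injective R K)).2 ha
  have hx_unit : IsUnit (spanSingleton R⁰ x) := isUnit_spanSingleton hx
  have hspan : ((Ideal.span {a} : Ideal R) : FractionalIdeal R⁰ K) = spanSingleton R⁰ x :=
    coeIdeal_span_singleton a
  obtain ⟨B, hB⟩ := le_one_iff_exists_coeIdeal.1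
    (spanSingleton_mul_inv_le_one (mem_coeIdeal_of_mem R⁰ haI : x ∈ J))
  have hB0 : B ≠ ⊥ := by
    rw [← coeIdeal_ne_zero (K := K), hB]
    exact hx_unit.mul_right_eq_zero.not.2
      (ne_bot_of_le_ne_bot one_ne_zero (one_le_inv_of_le_one hJ0 coeIdeal_le_one))
  have hIB : I * B ≤ Ideal.span {a} := by
    rw [← coeIdeal_le_coeIdeal K, coeIdeal_mul, hB, hspan, mul_left_comm]
    exact mul_le_of_le_one_right' mul_one_div_le_one
  obtain ⟨A, B', hIA, hBB', hsplit⟩ := h _ _ _ (by simpa using ha) hI hB0 hIB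
  have hsplitK : spanSingleton R⁰ x = A * B' := by rw [← hspan, hsplit, coeIdeal_mul]
  refine ⟨A, hIA, isUnit_of_mul_isUnit_left (hsplitK ▸ hx_unit), ?_⟩
  have hx_mul : spanSingleton R⁰ x * (J⁻¹ * A) ≤ spanSingleton R⁰ x * 1 := by
    rw [← mul_assoc, ← hB, mul_one, hsplitK, mul_comm (A : FractionalIdeal R⁰ K)]
    exact mul_le_mul_left ((coeIdeal_le_coeIdeal K).2 hBB') _
  exact hx_unit.mul_le_mul_left.1 hx_mul

theorem sharp_isPseudoDedekind (R : Type*) [CommRing R] [IsDomain R]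
    (h : IsSharpDomain R) : IsPseudoDedekind R := by
  intro I hI
  obtain ⟨A, hIA, hA, hA_inv⟩ := h.exists_le_isUnit_inv_mul_le_one (FractionRing R) hI
  rw [FractionalIdeal.inv_inv_eq_of_le_of_inv_mul_le_one (FractionalIdeal.coeIdeal_ne_zero.2 hI)
    hA ((FractionalIdeal.coeIdeal_le_coeIdeal _).2 hIA) hA_inv]
  exact hA
end

section
/- If D is a sharp domain, A is a nonzero ideal of D, and b is a nonzero element of A, then the fractional ideal A⁻¹ is invertible. -/
/-!
Pick a nonzero `b ∈ A`. The ideal `B = b A⁻¹` is integral, contains `b`, and `A B ⊆ (b)`, so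
sharpness writes `(b) = A' B'` with `A ⊆ A'` and `B ⊆ B'`. As a factor of an invertible
principal ideal, `A'` is invertible, and `A'⁻¹ = b⁻¹ B' ⊇ b⁻¹ B = A⁻¹ ⊇ A'⁻¹`.
Hence `A⁻¹ = A'⁻¹` is invertible.
-/

open scoped nonZeroDivisors

namespace FractionalIdeal

variable {R K : Type*} [CommRing R] [IsDomain R] [Field K] [Algebra R K] [IsFractionRing R K]
  {I J J' u : FractionalIdeal R⁰ K}

lemma mul_inv_le_one_of_le (h : J ≤ I) : J * I⁻¹ ≤ 1 :=
  (mul_le_mul_left h _).trans mul_one_div_le_one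

lemma mul_mul_inv_le (I u : FractionalIdeal R⁰ K) : I * (u * I⁻¹) ≤ u :=
  calc I * (u * I⁻¹) = u * (I * I⁻¹) := mul_left_comm _ _ _
    _ ≤ u * 1 := by gcongr; exact mul_one_div_le_one
    _ = u := mul_one u

lemma inv_le_inv_of_mul_eq_of_isUnit (hu : IsUnit u) (hJ : J * J' = u) (hI : u * I⁻¹ ≤ J') :
    I⁻¹ ≤ J⁻¹ := by
  have hJ0 : J ≠ 0 := (isUnit_of_mul_isUnit_left (hJ ▸ hu)).ne_zero
  rw [inv_eq (I := J), le_div_iff_mul_le hJ0]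
  obtain ⟨v, rfl⟩ := hu
  calc I⁻¹ * J = ↑v⁻¹ * (J * (↑v * I⁻¹)) := by
        rw [mul_left_comm, Units.inv_mul_cancel_left, mul_comm]
    _ ≤ ↑v⁻¹ * (J * J') := by gcongr
    _ = 1 := by rw [hJ, v.inv_mul]

lemma isUnit_inv_of_isUnit (h : IsUnit I) : IsUnit I⁻¹ :=
  IsUnit.of_mul_eq_one I (by rw [mul_comm, (mul_inv_cancel_iff_isUnit K).mpr h])

end FractionalIdeal

open FractionalIdeal

theorem sharp_inv_invertible_general (R : Type*) [CommRing R] [IsDomain R]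
    (h : IsSharpDomain R) (A : Ideal R) (hA : A ≠ ⊥) :
    IsUnit ((A : FractionalIdeal (nonZeroDivisors R) (FractionRing R))⁻¹) := by
  set K := FractionRing R
  obtain ⟨b, hbA, hb0⟩ := Submodule.exists_mem_ne_zero_of_ne_bot hA
  set u : FractionalIdeal R⁰ K := ((Ideal.span {b} : Ideal R) : FractionalIdeal R⁰ K)
  have hu : IsUnit u := IsUnit.of_mul_eq_one _ (coe_ideal_span_singleton_mul_inv K hb0)
  have huA : u ≤ A := (coeIdeal_le_coeIdeal K).mpr ((Ideal.span_singleton_le_iff_mem _).mpr hbA)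
  obtain ⟨B, hB⟩ := le_one_iff_exists_coeIdeal.mp (mul_inv_le_one_of_le huA)
  have hB0 : B ≠ ⊥ := by
    have hA1 : 1 ≤ (A : FractionalIdeal R⁰ K)⁻¹ :=
      FractionalIdeal.one_le.mpr (FractionalIdeal.one_mem_inv_coe_ideal hA)
    rw [← coeIdeal_ne_zero (K := K), hB]
    exact ne_bot_of_le_ne_bot hu.ne_zero (le_mul_of_one_le_right' hA1)
  have hAB : A * B ≤ Ideal.span {b} := by
    rw [← coeIdeal_le_coeIdeal K, coeIdeal_mul, hB]
    exact mul_mul_inv_le _ _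
  obtain ⟨A', B', hAA', hBB', hb⟩ := h _ A B (by simpa using hb0) hA hB0 hAB
  have hA'B' : (A' : FractionalIdeal R⁰ K) * B' = u := by rw [← coeIdeal_mul, ← hb]
  have hA' : IsUnit (A' : FractionalIdeal R⁰ K) := isUnit_of_mul_isUnit_left (hA'B' ▸ hu)
  have hinv : (A : FractionalIdeal R⁰ K)⁻¹ = (A' : FractionalIdeal R⁰ K)⁻¹ :=
    le_antisymm
      (inv_le_inv_of_mul_eq_of_isUnit hu hA'B' (hB ▸ (coeIdeal_le_coeIdeal K).mpr hBB'))
      (inv_anti_mono (coeIdeal_ne_zero.mpr hA) hA'.ne_zero ((coeIdeal_le_coeIdeal K).mpr hAA'))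
  rw [hinv]
  exact isUnit_inv_of_isUnit hA'

theorem sharp_inv_invertible (R : Type*) [CommRing R] [IsDomain R]
    (h : IsSharpDomain R) (A : Ideal R) (hA : A ≠ ⊥) (b : R) (hb : b ∈ A) (hb0 : b ≠ 0) :
    IsUnit ((A : FractionalIdeal (nonZeroDivisors R) (FractionRing R))⁻¹) :=
  sharp_inv_invertible_general R h A hA
end

section
/- If D is an integral domain and I : H is an invertible ideal of D for nonzero ideals I, H, then I : (I : H) = I · (I : H)⁻¹. -/
/-! For an invertible `J`, multiplication by `J` is an order isomorphism of fractional ideals, so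
the adjunction `A ≤ I : J ↔ A * J ≤ I` becomes `A ≤ I * J⁻¹ ↔ A ≤ I : J` for integral ideals `A`.
If moreover `I ≤ J`, then `I * J⁻¹ ≤ J * J⁻¹ = 1` is itself integral, hence equal to `I : J`.
Since `I ≤ I : H`, this applies to `J = I : H`. -/

open FractionalIdeal nonZeroDivisors

theorem Ideal.le_colon_iff_mul_le_s5 {R : Type*} [CommRing R] {A I J : Ideal R} :
    A ≤ I.colon J ↔ A * J ≤ I := by
  rw [Ideal.mul_le]
  simp only [SetLike.le_def, Submodule.mem_colon, smul_eq_mul, SetLike.mem_coe]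

namespace FractionalIdeal

variable {R K : Type*} [CommRing R] [IsDomain R] [Field K] [Algebra R K] [IsFractionRing R K]

theorem mul_le_iff_le_mul_inv {J : FractionalIdeal R⁰ K} (hJ : IsUnit J)
    {A B : FractionalIdeal R⁰ K} : A * J ≤ B ↔ A ≤ B * J⁻¹ := by
  have hJJ : J * J⁻¹ = 1 := mul_inv_cancel_iff_isUnit K |>.mpr hJ
  constructor
  · intro h
    calc A = A * J * J⁻¹ := by rw [mul_assoc, hJJ, mul_one]
      _ ≤ B * J⁻¹ := mul_le_mul_left h _
  · intro h
    calc A * J ≤ B * J⁻¹ * J := mul_le_mul_left h _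
      _ = B := by rw [mul_assoc, mul_comm J⁻¹, hJJ, mul_one]

theorem coeIdeal_le_mul_inv_iff_le_colon {A I J : Ideal R}
    (hJ : IsUnit (J : FractionalIdeal R⁰ K)) :
    (A : FractionalIdeal R⁰ K) ≤ I * (J : FractionalIdeal R⁰ K)⁻¹ ↔ A ≤ I.colon J := by
  rw [← mul_le_iff_le_mul_inv hJ, ← coeIdeal_mul, coeIdeal_le_coeIdeal,
    Ideal.le_colon_iff_mul_le_s5]

theorem coeIdeal_colon_eq_mul_inv {I J : Ideal R} (hIJ : I ≤ J)
    (hJ : IsUnit (J : FractionalIdeal R⁰ K)) :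
    ((I.colon J : Ideal R) : FractionalIdeal R⁰ K) = I * (J : FractionalIdeal R⁰ K)⁻¹ := by
  have hle_one : (I : FractionalIdeal R⁰ K) * (J : FractionalIdeal R⁰ K)⁻¹ ≤ 1 :=
    calc _ ≤ (J : FractionalIdeal R⁰ K) * (J : FractionalIdeal R⁰ K)⁻¹ :=
          mul_le_mul_left ((coeIdeal_le_coeIdeal K).mpr hIJ) _
      _ = 1 := mul_inv_cancel_iff_isUnit K |>.mpr hJ
  obtain ⟨A, hA⟩ := le_one_iff_exists_coeIdeal.mp hle_one
  rw [← hA]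
  refine le_antisymm ?_ ((coeIdeal_le_coeIdeal K).mpr ?_)
  · rw [hA, coeIdeal_le_mul_inv_iff_le_colon hJ]
  · rw [← coeIdeal_le_mul_inv_iff_le_colon hJ, hA]

end FractionalIdeal

theorem colon_colon_eq_mul_inv_general (R : Type*) [CommRing R] [IsDomain R]
    (I H : Ideal R)
    (hinv : IsUnit ((I.colon H : FractionalIdeal (nonZeroDivisors R) (FractionRing R)))) :
    ((I.colon (I.colon H) : Ideal R) : FractionalIdeal (nonZeroDivisors R) (FractionRing R)) =
      (I : FractionalIdeal (nonZeroDivisors R) (FractionRing R)) *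
        ((I.colon H : Ideal R) : FractionalIdeal (nonZeroDivisors R) (FractionRing R))⁻¹ :=
  coeIdeal_colon_eq_mul_inv Ideal.le_colon hinv

theorem colon_colon_eq_mul_inv (R : Type*) [CommRing R] [IsDomain R]
    (I H : Ideal R) (hI : I ≠ ⊥) (hH : H ≠ ⊥)
    (hinv : IsUnit ((I.colon H : FractionalIdeal (nonZeroDivisors R) (FractionRing R)))) :
    ((I.colon (I.colon H) : Ideal R) : FractionalIdeal (nonZeroDivisors R) (FractionRing R)) =
      (I : FractionalIdeal (nonZeroDivisors R) (FractionRing R)) *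
        ((I.colon H : Ideal R) : FractionalIdeal (nonZeroDivisors R) (FractionRing R))⁻¹ :=
  colon_colon_eq_mul_inv_general R I H hinv
end

section
/- A pseudo-Dedekind domain D is sharp if and only if for all nonzero ideals I, A, B of D with I ⊇ A·B and I_v = D, there exist ideals A' ⊇ A and B' ⊇ B such that I = A'·B'. -/
/-!
Only sufficiency needs an argument. Put `P = I_v`, invertible because `R` is pseudo-Dedekind.
From `A B ⊆ I` one gets `A B_v ⊆ A_v B_v ⊆ (A B)_v ⊆ P`. The quasi-Schreier property splits
`P = C D` with `A ⊆ C` and `B_v ⊆ D`, taking `C = P B_v⁻¹ ∩ R`, which is divisorial as an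
intersection of invertible ideals and therefore invertible. Now `J = I P⁻¹` satisfies
`J_v = I_v P⁻¹ = R` and contains `(A C⁻¹)(B D⁻¹)`, so the hypothesis gives `J = A₂ B₂` with
`A C⁻¹ ⊆ A₂`, `B D⁻¹ ⊆ B₂`, and finally `I = J C D = (A₂ C)(B₂ D)`.
-/

open FractionalIdeal
open scoped nonZeroDivisors

namespace FractionalIdeal

variable {R K : Type*} [CommRing R] [IsDomain R] [Field K] [Algebra R K] [IsFractionRing R K]
  {X Y u : FractionalIdeal R⁰ K}

theorem inv_ne_zero_of_ne_zero (hX : X ≠ 0) : X⁻¹ ≠ 0 := fun h =>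
  IsFractionRing.to_map_ne_zero_of_mem_nonZeroDivisors X.den.2 <|
    eq_zero_iff.1 h _ (den_mem_inv hX)

instance : NoZeroDivisors (FractionalIdeal R⁰ K) where
  eq_zero_or_eq_zero_of_mul_eq_zero {X Y} h := by
    by_contra! hXY
    obtain ⟨x, hx, hx0⟩ : ∃ x ∈ X, x ≠ 0 := by simpa [eq_zero_iff] using hXY.1
    obtain ⟨y, hy, hy0⟩ : ∃ y ∈ Y, y ≠ 0 := by simpa [eq_zero_iff] using hXY.2
    exact mul_ne_zero hx0 hy0 (eq_zero_iff.1 h _ (mul_mem_mul hx hy))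

theorem le_inv_iff_mul_le_one (hY : Y ≠ 0) : X ≤ Y⁻¹ ↔ X * Y ≤ 1 :=
  le_div_iff_mul_le hY

theorem mul_inv_le_one (X : FractionalIdeal R⁰ K) : X * X⁻¹ ≤ 1 :=
  mul_one_div_le_one

theorem le_inv_inv (hX : X ≠ 0) : X ≤ X⁻¹⁻¹ :=
  (le_inv_iff_mul_le_one (inv_ne_zero_of_ne_zero hX)).2 (mul_inv_le_one X)

theorem inv_inv_mono (hX : X ≠ 0) (hXY : X ≤ Y) : X⁻¹⁻¹ ≤ Y⁻¹⁻¹ := by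
  have hY : Y ≠ 0 := ne_bot_of_le_ne_bot hX hXY
  exact inv_anti_mono (inv_ne_zero_of_ne_zero hY) (inv_ne_zero_of_ne_zero hX)
    (inv_anti_mono hX hY hXY)

theorem inv_inv_le_one (hX0 : X ≠ 0) (hX1 : X ≤ 1) : X⁻¹⁻¹ ≤ 1 :=
  (inv_inv_mono hX0 hX1).trans_eq (by rw [inv_one, inv_one])

theorem mul_inv_inv_le_one_of_mul_le_one (hY : Y ≠ 0) (h : X * Y ≤ 1) : X * Y⁻¹⁻¹ ≤ 1 :=
  calc X * Y⁻¹⁻¹ ≤ Y⁻¹ * Y⁻¹⁻¹ := by gcongr; exact (le_inv_iff_mul_le_one hY).2 h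
    _ ≤ 1 := mul_inv_le_one _

theorem inv_inv_mul_inv_inv_le (hX : X ≠ 0) (hY : Y ≠ 0) : X⁻¹⁻¹ * Y⁻¹⁻¹ ≤ (X * Y)⁻¹⁻¹ := by
  have hXY : X * Y ≠ 0 := mul_ne_zero hX hY
  rw [le_inv_iff_mul_le_one (inv_ne_zero_of_ne_zero hXY)]
  have hX' : (X * Y)⁻¹ * Y⁻¹⁻¹ * X ≤ 1 := by
    rw [mul_right_comm]
    refine mul_inv_inv_le_one_of_mul_le_one hY ?_
    rw [mul_assoc, mul_comm]
    exact mul_inv_le_one _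
  calc X⁻¹⁻¹ * Y⁻¹⁻¹ * (X * Y)⁻¹ = (X * Y)⁻¹ * Y⁻¹⁻¹ * X⁻¹⁻¹ := by ring
    _ ≤ 1 := mul_inv_inv_le_one_of_mul_le_one hX hX'

theorem inv_inv_inf (hXY : X ⊓ Y ≠ 0) (hX : X⁻¹⁻¹ = X) (hY : Y⁻¹⁻¹ = Y) :
    (X ⊓ Y)⁻¹⁻¹ = X ⊓ Y :=
  le_antisymm
    (le_inf ((inv_inv_mono hXY inf_le_left).trans_eq hX)
      ((inv_inv_mono hXY inf_le_right).trans_eq hY))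
    (le_inv_inv hXY)

section Units

variable (hu : IsUnit u)
include hu

theorem mul_inv_cancel_of_isUnit : u * u⁻¹ = 1 :=
  (mul_inv_cancel_iff_isUnit K).2 hu

theorem inv_inv_of_isUnit_s6 : u⁻¹⁻¹ = u :=
  (right_inverse_eq _ _ _ (by rw [mul_comm, mul_inv_cancel_of_isUnit hu])).symm

theorem isUnit_inv_of_isUnit_s6 : IsUnit u⁻¹ :=
  .of_mul_eq_one _ (by rw [mul_comm, mul_inv_cancel_of_isUnit hu])

theorem le_mul_inv_iff : X ≤ Y * u⁻¹ ↔ X * u ≤ Y := by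
  constructor <;> intro h
  · simpa [mul_assoc, mul_comm u⁻¹, mul_inv_cancel_of_isUnit hu] using mul_le_mul_left h u
  · simpa [mul_assoc, mul_inv_cancel_of_isUnit hu] using mul_le_mul_left h u⁻¹

theorem mul_inv_le_iff : X * u⁻¹ ≤ Y ↔ X ≤ Y * u := by
  rw [← le_mul_inv_iff (isUnit_inv_of_isUnit_s6 hu), inv_inv_of_isUnit_s6 hu]

theorem mul_inv_le_one_of_le_s6 (h : X ≤ u) : X * u⁻¹ ≤ 1 :=
  calc X * u⁻¹ ≤ u * u⁻¹ := by gcongr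
    _ = 1 := mul_inv_cancel_of_isUnit hu

theorem inv_mul_of_isUnit (X : FractionalIdeal R⁰ K) : (X * u)⁻¹ = X⁻¹ * u⁻¹ := by
  rcases eq_or_ne X 0 with rfl | hX
  · simp [inv_zero']
  have hXu : X * u ≠ 0 := (hu.mul_left_eq_zero).not.2 hX
  refine eq_of_forall_le_iff fun Z => ?_
  rw [le_inv_iff_mul_le_one hXu, le_mul_inv_iff hu, le_inv_iff_mul_le_one hX, mul_right_comm,
    mul_assoc]

theorem inv_inv_mul_of_isUnit (X : FractionalIdeal R⁰ K) : (X * u)⁻¹⁻¹ = X⁻¹⁻¹ * u := by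
  rw [inv_mul_of_isUnit hu, inv_mul_of_isUnit (isUnit_inv_of_isUnit_s6 hu), inv_inv_of_isUnit_s6 hu]

end Units

def FactorsAbove {R K : Type*} [CommRing R] [CommRing K] [Algebra R K] {S : Submonoid R}
    (I A B : FractionalIdeal S K) : Prop :=
  ∃ A' B' : FractionalIdeal S K, A' ≤ 1 ∧ B' ≤ 1 ∧ A ≤ A' ∧ B ≤ B' ∧ I = A' * B'

omit [IsDomain R] in
theorem factorsAbove_coeIdeal_iff {I A B : Ideal R} :
    FactorsAbove (I : FractionalIdeal R⁰ K) A B ↔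
      ∃ A' B' : Ideal R, A ≤ A' ∧ B ≤ B' ∧ I = A' * B' := by
  constructor
  · rintro ⟨A', B', hA', hB', hAA', hBB', hI⟩
    obtain ⟨A', rfl⟩ := le_one_iff_exists_coeIdeal.1 hA'
    obtain ⟨B', rfl⟩ := le_one_iff_exists_coeIdeal.1 hB'
    refine ⟨A', B', (coeIdeal_le_coeIdeal K).1 hAA', (coeIdeal_le_coeIdeal K).1 hBB', ?_⟩
    rwa [← coeIdeal_mul, coeIdeal_inj] at hI
  · rintro ⟨A', B', hAA', hBB', rfl⟩
    exact ⟨A', B', coeIdeal_le_one, coeIdeal_le_one, (coeIdeal_le_coeIdeal K).2 hAA',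
      (coeIdeal_le_coeIdeal K).2 hBB', coeIdeal_mul _ _⟩

theorem FactorsAbove.mul_isUnit {J A B C D : FractionalIdeal R⁰ K}
    (h : FactorsAbove J (A * C⁻¹) (B * D⁻¹)) (hC : IsUnit C) (hD : IsUnit D) (hC1 : C ≤ 1)
    (hD1 : D ≤ 1) : FactorsAbove (J * (C * D)) A B := by
  obtain ⟨A', B', hA', hB', hAA', hBB', rfl⟩ := h
  exact ⟨A' * C, B' * D, mul_le_one' hA' hC1, mul_le_one' hB' hD1, (mul_inv_le_iff hC).1 hAA',
    (mul_inv_le_iff hD).1 hBB', by ring⟩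

end FractionalIdeal

namespace IsPseudoDedekind

variable {R : Type*} [CommRing R] [IsDomain R] (hPD : IsPseudoDedekind R)
include hPD

local notation "F" => FractionalIdeal R⁰ (FractionRing R)

theorem isUnit_inv_inv {X : F} (hX0 : X ≠ 0) (hX1 : X ≤ 1) : IsUnit X⁻¹⁻¹ := by
  obtain ⟨I, rfl⟩ := le_one_iff_exists_coeIdeal.1 hX1
  exact hPD I (coeIdeal_ne_zero.1 hX0)

theorem exists_mul_eq_of_mul_le {P X Y : F} (hP : IsUnit P) (hY : IsUnit Y) (hP1 : P ≤ 1)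
    (hX0 : X ≠ 0) (hX1 : X ≤ 1) (hY1 : Y ≤ 1) (hXY : X * Y ≤ P) :
    ∃ C D : F, IsUnit C ∧ IsUnit D ∧ C ≤ 1 ∧ D ≤ 1 ∧ X ≤ C ∧ Y ≤ D ∧ C * D = P := by
  set C := P * Y⁻¹ ⊓ 1
  have hXC : X ≤ C := le_inf ((le_mul_inv_iff hY).2 hXY) hX1
  have hC0 : C ≠ 0 := ne_bot_of_le_ne_bot hX0 hXC
  have hC : IsUnit C := by
    have hCv : C⁻¹⁻¹ = C := inv_inv_inf hC0
      (inv_inv_of_isUnit_s6 (hP.mul (isUnit_inv_of_isUnit_s6 hY))) (inv_inv_of_isUnit_s6 isUnit_one)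
    simpa only [hCv] using hPD.isUnit_inv_inv hC0 inf_le_right
  have hPC : P ≤ C := le_inf ((le_mul_inv_iff hY).2 (mul_le_of_le_one_right' hY1)) hP1
  refine ⟨C, P * C⁻¹, hC, hP.mul (isUnit_inv_of_isUnit_s6 hC), inf_le_right,
    mul_inv_le_one_of_le_s6 hC hPC, hXC, ?_, ?_⟩
  · rw [le_mul_inv_iff hC, mul_comm, ← le_mul_inv_iff hY]
    exact inf_le_left
  · rw [mul_left_comm, mul_inv_cancel_of_isUnit hC, mul_one]

theorem factorsAbove
    (h : ∀ J A B : F, J ≤ 1 → A ≤ 1 → B ≤ 1 → J ≠ 0 → A ≠ 0 → B ≠ 0 → A * B ≤ J →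
      J⁻¹⁻¹ = 1 → FactorsAbove J A B)
    {I A B : F} (hI1 : I ≤ 1) (hA1 : A ≤ 1) (hB1 : B ≤ 1) (hI0 : I ≠ 0) (hA0 : A ≠ 0)
    (hB0 : B ≠ 0) (hAB : A * B ≤ I) : FactorsAbove I A B := by
  set P := I⁻¹⁻¹
  have hP : IsUnit P := hPD.isUnit_inv_inv hI0 hI1
  have hABv : A * B⁻¹⁻¹ ≤ P :=
    calc A * B⁻¹⁻¹ ≤ A⁻¹⁻¹ * B⁻¹⁻¹ := by gcongr; exact le_inv_inv hA0
      _ ≤ (A * B)⁻¹⁻¹ := inv_inv_mul_inv_inv_le hA0 hB0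
      _ ≤ P := inv_inv_mono (mul_ne_zero hA0 hB0) hAB
  obtain ⟨C, D, hC, hD, hC1, hD1, hAC, hBD, hCD⟩ :=
    hPD.exists_mul_eq_of_mul_le hP (hPD.isUnit_inv_inv hB0 hB1) (inv_inv_le_one hI0 hI1) hA0 hA1
      (inv_inv_le_one hB0 hB1) hABv
  have hJ : FactorsAbove (I * P⁻¹) (A * C⁻¹) (B * D⁻¹) := by
    refine h _ _ _ (mul_inv_le_one_of_le_s6 hP (le_inv_inv hI0)) (mul_inv_le_one_of_le_s6 hC hAC)
      (mul_inv_le_one_of_le_s6 hD ((le_inv_inv hB0).trans hBD))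
      (mul_ne_zero hI0 (isUnit_inv_of_isUnit_s6 hP).ne_zero)
      (mul_ne_zero hA0 (isUnit_inv_of_isUnit_s6 hC).ne_zero)
      (mul_ne_zero hB0 (isUnit_inv_of_isUnit_s6 hD).ne_zero) ?_ ?_
    · calc A * C⁻¹ * (B * D⁻¹) = A * B * (C * D)⁻¹ := by rw [inv_mul_of_isUnit hD]; ring
        _ ≤ I * P⁻¹ := by rw [hCD]; gcongr
    · rw [inv_inv_mul_of_isUnit (isUnit_inv_of_isUnit_s6 hP), mul_inv_cancel_of_isUnit hP]
  have hI : I = I * P⁻¹ * (C * D) := by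
    rw [hCD, mul_assoc, mul_comm P⁻¹, mul_inv_cancel_of_isUnit hP, mul_one]
  exact hI ▸ hJ.mul_isUnit hC hD hC1 hD1

end IsPseudoDedekind

theorem pseudoDedekind_sharp_iff (R : Type*) [CommRing R] [IsDomain R]
    (hPD : IsPseudoDedekind R) :
    IsSharpDomain R ↔
      ∀ I A B : Ideal R, I ≠ ⊥ → A ≠ ⊥ → B ≠ ⊥ → A * B ≤ I →
        ((I : FractionalIdeal (nonZeroDivisors R) (FractionRing R))⁻¹)⁻¹ = 1 →
        ∃ A' B' : Ideal R, A ≤ A' ∧ B ≤ B' ∧ I = A' * B' := by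
  refine ⟨fun hsharp I A B hI hA hB hAB _ => hsharp I A B hI hA hB hAB,
    fun h I A B hI hA hB hAB => ?_⟩
  rw [← factorsAbove_coeIdeal_iff (K := FractionRing R)]
  refine hPD.factorsAbove (fun J A B hJ1 hA1 hB1 hJ0 hA0 hB0 hAB hJv => ?_) coeIdeal_le_one
    coeIdeal_le_one coeIdeal_le_one (coeIdeal_ne_zero.2 hI) (coeIdeal_ne_zero.2 hA)
    (coeIdeal_ne_zero.2 hB) (by rw [← coeIdeal_mul]; exact (coeIdeal_le_coeIdeal _).2 hAB)
  obtain ⟨J, rfl⟩ := le_one_iff_exists_coeIdeal.1 hJ1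
  obtain ⟨A, rfl⟩ := le_one_iff_exists_coeIdeal.1 hA1
  obtain ⟨B, rfl⟩ := le_one_iff_exists_coeIdeal.1 hB1
  rw [← coeIdeal_mul, coeIdeal_le_coeIdeal] at hAB
  exact factorsAbove_coeIdeal_iff.2 <| h J A B (coeIdeal_ne_zero.1 hJ0) (coeIdeal_ne_zero.1 hA0)
    (coeIdeal_ne_zero.1 hB0) hAB hJv
end

section
/- A valuation domain D is sharp if and only if D is pseudo-Dedekind. -/
/-!
Sharp implies pseudo-Dedekind in any domain: for `0 ≠ d ∈ I` the ideal `B = d I⁻¹` satisfies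
`I B ⊆ dR`, so sharpness writes `dR = A' B'` with `I ⊆ A'` and `B ⊆ B'`. Both factors divide
the invertible `dR`, hence are invertible, and cancelling `B'` in `A' B' I⁻¹ = B ⊆ B'` gives
`A' I⁻¹ ⊆ R`, so `A' = I_v`.

Conversely, in a valuation domain with maximal ideal `M` invertible ideals are principal, so
pseudo-Dedekind means that every nonzero ideal `J` lies in a least principal ideal `zR = J_v`, and
then `J = zR` or `J = zM`. Given `I ⊇ AB` with `A ⊄ I`, write `I = zE` (`E = R` or `M`) and
`A_v = aR ⊇ I`, so `z = ac`. If `A = aR`, then `I = A · cE`. If `A = aM`, then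
`aB ⊆ A_v B ⊆ zR` gives `B ⊆ cR`, and `I = aE · cR`.
-/

open FractionalIdeal
open scoped nonZeroDivisors

section FractionalIdeal

variable {R K : Type*} [CommRing R] [IsDomain R] [Field K] [Algebra R K] [IsFractionRing R K]

local notation "𝓕" => FractionalIdeal R⁰ K

namespace FractionalIdeal

variable {I J : FractionalIdeal R⁰ K}

theorem inv_ne_zero (hI : I ≠ 0) : I⁻¹ ≠ 0 := fun h =>
  (bot_lt_mul_inv hI).ne' (by rw [h, mul_zero, bot_eq_zero])

theorem mul_inv_le_one_s7 (I : 𝓕) : I * I⁻¹ ≤ 1 := by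
  rcases eq_or_ne I 0 with rfl | hI
  · simp
  · rw [inv_eq, mul_comm, ← le_div_iff_mul_le hI]

theorem le_inv_iff_mul_le_one_s7 (hI : I ≠ 0) : J ≤ I⁻¹ ↔ J * I ≤ 1 :=
  le_div_iff_mul_le hI

theorem le_inv_inv_s7 (I : 𝓕) : I ≤ I⁻¹⁻¹ := by
  rcases eq_or_ne I 0 with rfl | hI
  · exact zero_le _
  · exact (le_inv_iff_mul_le_one_s7 (inv_ne_zero hI)).2 (mul_inv_le_one_s7 I)

theorem inv_inv_of_isUnit_s7 (h : IsUnit I) : I⁻¹⁻¹ = I :=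
  (right_inverse_eq _ _ _ (by rw [mul_comm, (mul_inv_cancel_iff_isUnit K).2 h])).symm

theorem inv_inv_le_of_le_of_isUnit (hI : I ≠ 0) (hIJ : I ≤ J) (hJ : IsUnit J) : I⁻¹⁻¹ ≤ J :=
  calc I⁻¹⁻¹ ≤ J⁻¹⁻¹ := inv_anti_mono (inv_ne_zero hJ.ne_zero) (inv_ne_zero hI)
        (inv_anti_mono hI hJ.ne_zero hIJ)
    _ = J := inv_inv_of_isUnit_s7 hJ

theorem isUnit_coeIdeal_span_singleton {x : R} (hx : x ≠ 0) :
    IsUnit ((Ideal.span {x} : Ideal R) : 𝓕) :=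
  (mul_inv_cancel_iff_isUnit K).1 (coe_ideal_span_singleton_mul_inv K hx)

end FractionalIdeal

theorem IsSharpDomain.isUnit_inv_inv (hR : IsSharpDomain R) {I : Ideal R} (hI : I ≠ ⊥) :
    IsUnit ((I : 𝓕)⁻¹⁻¹) := by
  obtain ⟨d, hdI, hd⟩ := Submodule.exists_mem_ne_zero_of_ne_bot hI
  have hD : IsUnit ((Ideal.span {d} : Ideal R) : 𝓕) := isUnit_coeIdeal_span_singleton hd
  have hI0 : (I : 𝓕) ≠ 0 := coeIdeal_ne_zero.2 hI
  have hdI' : ((Ideal.span {d} : Ideal R) : 𝓕) ≤ I :=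
    (coeIdeal_le_coeIdeal K).2 ((Ideal.span_singleton_le_iff_mem I).2 hdI)
  obtain ⟨B, hB⟩ := le_one_iff_exists_coeIdeal.1
    ((mul_le_mul_left hdI' (I : 𝓕)⁻¹).trans (mul_inv_le_one_s7 (I : 𝓕)))
  have hB0 : B ≠ ⊥ := by
    rw [← coeIdeal_ne_zero (K := K), hB, Ne, hD.mul_right_eq_zero]
    exact inv_ne_zero hI0
  have hIB : I * B ≤ Ideal.span {d} := by
    rw [← coeIdeal_le_coeIdeal K, coeIdeal_mul, hB, mul_left_comm]
    exact mul_le_of_le_one_right' (mul_inv_le_one_s7 _)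
  obtain ⟨A', B', hIA', hBB', hdA'B'⟩ := hR _ I B (by simpa using hd) hI hB0 hIB
  have hA'B' : (A' : 𝓕) * B' = (Ideal.span {d} : Ideal R) := by rw [← coeIdeal_mul, ← hdA'B']
  have hA' : IsUnit (A' : 𝓕) := isUnit_of_mul_isUnit_left (hA'B' ▸ hD)
  have hB' : (B' : 𝓕) * (B' : 𝓕)⁻¹ = 1 :=
    (mul_inv_cancel_iff_isUnit K).2 (isUnit_of_mul_isUnit_right (hA'B' ▸ hD))
  suffices h : (I : 𝓕)⁻¹⁻¹ = A' from h ▸ hA'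
  refine le_antisymm (inv_inv_le_of_le_of_isUnit hI0 ((coeIdeal_le_coeIdeal K).2 hIA') hA') ?_
  rw [le_inv_iff_mul_le_one_s7 (inv_ne_zero hI0)]
  calc (A' : 𝓕) * (I : 𝓕)⁻¹ = A' * B' * (I : 𝓕)⁻¹ * (B' : 𝓕)⁻¹ := by
        rw [mul_right_comm _ (B' : 𝓕), mul_assoc _ (B' : 𝓕), hB', mul_one]
    _ = B * (B' : 𝓕)⁻¹ := by rw [hA'B', hB]
    _ ≤ B' * (B' : 𝓕)⁻¹ := mul_le_mul_left ((coeIdeal_le_coeIdeal K).2 hBB') _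
    _ = 1 := hB'

end FractionalIdeal

section PrincipalHull

variable {R : Type*} [CommRing R] [IsDomain R]

/-- `span {z}` is the least principal ideal containing `J`; for pseudo-Dedekind `R` it is `J_v`. -/
def Ideal.IsPrincipalHull (J : Ideal R) (z : R) : Prop :=
  ∀ x : R, J ≤ Ideal.span {x} ↔ x ∣ z

theorem IsPseudoDedekind.exists_isPrincipalHull [IsBezout R] (hR : IsPseudoDedekind R)
    {J : Ideal R} (hJ : J ≠ ⊥) : ∃ z : R, J.IsPrincipalHull z := by
  have hJ0 : (J : FractionalIdeal R⁰ (FractionRing R)) ≠ 0 := coeIdeal_ne_zero.2 hJ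
  obtain ⟨V, hV⟩ := le_one_iff_exists_coeIdeal.1
    (inv_inv_le_of_le_of_isUnit hJ0 coeIdeal_le_one isUnit_one)
  obtain ⟨z, rfl⟩ : ∃ z, V = Ideal.span {z} :=
    ⟨_, ((IsBezout.isPrincipal_of_FG V (V.fg_of_isUnit (IsFractionRing.injective R _)
      (hV ▸ hR J hJ))).principal).choose_spec⟩
  refine ⟨z, fun x => ?_⟩
  rw [← Ideal.span_singleton_le_span_singleton, ← coeIdeal_le_coeIdeal (FractionRing R),
    ← coeIdeal_le_coeIdeal (FractionRing R), hV]
  refine ⟨fun hJx => inv_inv_le_of_le_of_isUnit hJ0 hJx (isUnit_coeIdeal_span_singleton ?_),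
    (le_inv_inv_s7 _).trans⟩
  rintro rfl
  exact hJ (by simpa using hJx)

end PrincipalHull

section ValuationRing

variable {R : Type*} [CommRing R] [IsDomain R] [ValuationRing R] {J : Ideal R} {z : R}

open IsLocalRing

theorem Ideal.IsPrincipalHull.exists_eq_span_singleton_mul (hz : J.IsPrincipalHull z) :
    ∃ E : Ideal R, maximalIdeal R ≤ E ∧ J = Ideal.span {z} * E := by
  have hJz : J ≤ Ideal.span {z} := (hz z).2 dvd_rfl
  by_cases hzJ : Ideal.span {z} ≤ J
  · exact ⟨⊤, le_top, by rw [Ideal.mul_top]; exact le_antisymm hJz hzJ⟩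
  refine ⟨maximalIdeal R, le_rfl, le_antisymm (fun j hj => ?_) ?_⟩
  · obtain ⟨r, rfl⟩ := Ideal.mem_span_singleton.1 (hJz hj)
    refine Ideal.mul_mem_mul (Ideal.mem_span_singleton_self z) fun hr => hzJ ?_
    rwa [Ideal.span_singleton_le_iff_mem, ← J.mul_unit_mem_iff_mem hr]
  · refine Ideal.span_singleton_mul_le_iff.2 fun m hm => ?_
    rcases total_of (· ≤ ·) (Ideal.span {z * m}) J with h | h
    · exact (Ideal.span_singleton_le_iff_mem J).1 h
    rcases eq_or_ne z 0 with rfl | hz0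
    · simp
    have : m ∣ 1 := (mul_dvd_mul_iff_left hz0).1 (by simpa using (hz _).1 h)
    exact absurd (isUnit_of_dvd_one this) hm

theorem Ideal.IsPrincipalHull.span_singleton_mul_le {A B : Ideal R} {a : R}
    (ha : A.IsPrincipalHull a) (hAB : A * B ≤ Ideal.span {z}) :
    Ideal.span {a} * B ≤ Ideal.span {z} := by
  refine Ideal.span_singleton_mul_le_iff.2 fun x hx => Ideal.mem_span_singleton.2 ?_
  rcases ValuationRing.dvd_total z x with hzx | ⟨w, rfl⟩
  · exact hzx.mul_left a
  rcases eq_or_ne x 0 with rfl | hx0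
  · simp
  have hAw : A ≤ Ideal.span {w} := fun y hy => Ideal.mem_span_singleton.2 <|
    (mul_dvd_mul_iff_left hx0).1 <| Ideal.mem_span_singleton.1 <|
      hAB (mul_comm y x ▸ Ideal.mul_mem_mul hy hx)
  rw [mul_comm a]
  exact mul_dvd_mul_left x ((ha w).1 hAw)

theorem IsPseudoDedekind.isSharpDomain (hR : IsPseudoDedekind R) : IsSharpDomain R := by
  intro I A B hI hA _ hAB
  rcases total_of (· ≤ ·) A I with hAI | hIA
  · exact ⟨I, ⊤, hAI, le_top, (Ideal.mul_top I).symm⟩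
  obtain ⟨z, hz⟩ := hR.exists_isPrincipalHull hI
  obtain ⟨a, ha⟩ := hR.exists_isPrincipalHull hA
  have hAa : A ≤ Ideal.span {a} := (ha a).2 dvd_rfl
  have ha0 : a ≠ 0 := by rintro rfl; exact hA (by simpa using hAa)
  obtain ⟨c, rfl⟩ : a ∣ z := (hz a).1 (hIA.trans hAa)
  obtain ⟨E, hME, rfl⟩ := hz.exists_eq_span_singleton_mul
  obtain ⟨EA, -, hAEA⟩ := ha.exists_eq_span_singleton_mul
  by_cases hEA : EA = ⊤
  · rw [hEA, Ideal.mul_top] at hAEA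
    subst hAEA
    have hI : Ideal.span {a * c} * E = Ideal.span {a} * (Ideal.span {c} * E) := by
      rw [← mul_assoc, Ideal.span_singleton_mul_span_singleton]
    exact ⟨_, _, le_rfl, (Ideal.span_singleton_mul_right_mono ha0).1 (hI ▸ hAB), hI⟩
  refine ⟨Ideal.span {a} * E, Ideal.span {c}, ?_, ?_, ?_⟩
  · exact hAEA ▸ Ideal.mul_mono_right ((IsLocalRing.le_maximalIdeal hEA).trans hME)
  · rw [← Ideal.span_singleton_mul_right_mono ha0, Ideal.span_singleton_mul_span_singleton]
    exact ha.span_singleton_mul_le (hAB.trans Ideal.mul_le_left)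
  · rw [mul_right_comm, Ideal.span_singleton_mul_span_singleton]

end ValuationRing

theorem valuation_sharp_iff_pseudoDedekind (R : Type*) [CommRing R] [IsDomain R]
    [ValuationRing R] : IsSharpDomain R ↔ IsPseudoDedekind R :=
  ⟨fun h _ hI => h.isUnit_inv_inv hI, IsPseudoDedekind.isSharpDomain⟩
end

section
/- A valuation domain whose value group is order-isomorphic to the additive group of real numbers is a sharp domain. -/
open scoped Multiplicative

namespace SharpAux
set_option linter.unusedSectionVars false

abbrev G := WithZero (Multiplicative ℝ)

noncomputable def e (t : ℝ) : G := (Multiplicative.ofAdd t : Multiplicative ℝ)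

lemma e_ne_zero (t : ℝ) : e t ≠ 0 := WithZero.coe_ne_zero
lemma e_le_e {s t : ℝ} : e s ≤ e t ↔ s ≤ t := by
  simp [e, WithZero.coe_le_coe, Multiplicative.ofAdd_le]
lemma e_lt_e {s t : ℝ} : e s < e t ↔ s < t := by
  simp [e, WithZero.coe_lt_coe, Multiplicative.ofAdd_lt]
lemma e_add (s t : ℝ) : e (s + t) = e s * e t := by
  simp [e, ← WithZero.coe_mul, ← ofAdd_add]
lemma e_zero : e 0 = 1 := rfl
lemma exists_e {γ : G} (h : γ ≠ 0) : ∃ t, e t = γ :=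
  ⟨Multiplicative.toAdd (WithZero.unzero h), by simp [e, WithZero.coe_unzero]⟩

lemma e_mul_le_iff {s : ℝ} {a b : G} : e s * a ≤ e s * b ↔ a ≤ b := by
  constructor
  · intro h
    have h2 := mul_le_mul_right h (e (-s))
    rwa [← mul_assoc, ← mul_assoc, ← e_add, neg_add_cancel, e_zero, one_mul, one_mul] at h2
  · intro h; exact mul_le_mul_right h _
lemma e_mul_lt_iff {s : ℝ} {a b : G} : e s * a < e s * b ↔ a < b := by
  rw [lt_iff_le_not_ge, lt_iff_le_not_ge, e_mul_le_iff, e_mul_le_iff]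
lemma e_mul_cancel {s : ℝ} {a b : G} (h : e s * a = e s * b) : a = b :=
  le_antisymm (e_mul_le_iff.mp h.le) (e_mul_le_iff.mp h.ge)

variable {R : Type*} [CommRing R] [IsDomain R] [ValuationRing R]
  (v : Valuation (FractionRing R) G)
  (hint : ∀ x : FractionRing R, v x ≤ 1 ↔ x ∈ (algebraMap R (FractionRing R)).range)


include hint in
lemma v_alg_le_one (r : R) : v (algebraMap R (FractionRing R) r) ≤ 1 :=
  (hint _).mpr ⟨r, rfl⟩

lemma v_alg_ne_zero {r : R} (hr : r ≠ 0) : v (algebraMap R (FractionRing R) r) ≠ 0 :=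
  (Valuation.ne_zero_iff v).mpr
    ((map_ne_zero_iff _ (IsFractionRing.injective R (FractionRing R))).mpr hr)

include hint in
lemma dvd_of_v_le {y r : R} (hy : y ≠ 0)
    (h : v (algebraMap R (FractionRing R) r) ≤ v (algebraMap R (FractionRing R) y)) :
    ∃ c : R, r = y * c ∧
      v (algebraMap R (FractionRing R) y) * v (algebraMap R (FractionRing R) c)
        = v (algebraMap R (FractionRing R) r) := by
  have hy0 : (0 : G) < v (algebraMap R (FractionRing R) y) :=
    lt_of_le_of_ne (zero_le') (Ne.symm (v_alg_ne_zero v hy))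
  have h1 : v (algebraMap R (FractionRing R) r / algebraMap R (FractionRing R) y) ≤ 1 := by
    rw [v.map_div]; exact (div_le_one₀ hy0).mpr h
  obtain ⟨c, hc⟩ := (hint _).mp h1
  have hyK : algebraMap R (FractionRing R) y ≠ 0 :=
    (map_ne_zero_iff _ (IsFractionRing.injective R (FractionRing R))).mpr hy
  have hrc : algebraMap R (FractionRing R) r = algebraMap R (FractionRing R) (y * c) := by
    rw [map_mul, hc, mul_div_cancel₀ _ hyK]
  refine ⟨c, IsFractionRing.injective R (FractionRing R) hrc, ?_⟩
  rw [← map_mul, ← map_mul, ← hrc]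

include hint in
lemma exists_v_eq (hsurj : Function.Surjective v) {t : ℝ} (ht : t ≤ 0) :
    ∃ y : R, y ≠ 0 ∧ v (algebraMap R (FractionRing R) y) = e t := by
  obtain ⟨x, hx⟩ := hsurj (e t)
  have hx1 : v x ≤ 1 := by rw [hx, ← e_zero]; exact e_le_e.mpr ht
  obtain ⟨y, hy⟩ := (hint _).mp hx1
  refine ⟨y, ?_, by rw [hy, hx]⟩
  rintro rfl
  rw [map_zero] at hy
  exact e_ne_zero t (by rw [← hx, ← hy, map_zero])


variable (hsurj : Function.Surjective v)

/-- The ideal of elements of value at most `e t`. -/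
def ILE (t : ℝ) : Ideal R where
  carrier := {r | v (algebraMap R (FractionRing R) r) ≤ e t}
  zero_mem' := by simp only [Set.mem_setOf_eq, map_zero]; exact zero_le'
  add_mem' := by
    intro a b ha hb
    simp only [Set.mem_setOf_eq, map_add] at *
    exact le_trans (v.map_add _ _) (max_le ha hb)
  smul_mem' := by
    intro c x hx
    simp only [Set.mem_setOf_eq, smul_eq_mul, map_mul, v.map_mul] at *
    calc v (algebraMap R (FractionRing R) c) * v (algebraMap R (FractionRing R) x)
        ≤ 1 * e t := mul_le_mul' (v_alg_le_one v hint c) hx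
      _ = e t := one_mul _

/-- The ideal of elements of value strictly less than `e t`. -/
def ILT (t : ℝ) : Ideal R where
  carrier := {r | v (algebraMap R (FractionRing R) r) < e t}
  zero_mem' := by
    simp only [Set.mem_setOf_eq, map_zero]
    exact lt_of_le_of_ne zero_le' (Ne.symm (e_ne_zero t))
  add_mem' := by
    intro a b ha hb
    simp only [Set.mem_setOf_eq, map_add] at *
    exact lt_of_le_of_lt (v.map_add _ _) (max_lt ha hb)
  smul_mem' := by
    intro c x hx
    simp only [Set.mem_setOf_eq, smul_eq_mul, map_mul, v.map_mul] at *
    calc v (algebraMap R (FractionRing R) c) * v (algebraMap R (FractionRing R) x)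
        ≤ 1 * v (algebraMap R (FractionRing R) x) :=
          mul_le_mul' (v_alg_le_one v hint c) le_rfl
      _ = v (algebraMap R (FractionRing R) x) := one_mul _
      _ < e t := hx

lemma mem_ILE {t : ℝ} {r : R} :
    r ∈ ILE v hint t ↔ v (algebraMap R (FractionRing R) r) ≤ e t := Iff.rfl
lemma mem_ILT {t : ℝ} {r : R} :
    r ∈ ILT v hint t ↔ v (algebraMap R (FractionRing R) r) < e t := Iff.rfl

lemma ILE_mono {s t : ℝ} (h : s ≤ t) : ILE v hint s ≤ ILE v hint t :=
  fun _ hr => le_trans hr (e_le_e.mpr h)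
lemma ILT_mono {s t : ℝ} (h : s ≤ t) : ILT v hint s ≤ ILT v hint t :=
  fun _ hr => lt_of_lt_of_le hr (e_le_e.mpr h)
lemma ILT_le_ILE {s t : ℝ} (h : s ≤ t) : ILT v hint s ≤ ILE v hint t :=
  fun _ hr => le_trans (le_of_lt hr) (e_le_e.mpr h)
lemma ILE_le_ILT {s t : ℝ} (h : s < t) : ILE v hint s ≤ ILT v hint t :=
  fun _ hr => lt_of_le_of_lt hr (e_lt_e.mpr h)

include hsurj

lemma ILE_le_ILE_real {s t : ℝ} (hs : s ≤ 0) (h : ILE v hint s ≤ ILE v hint t) : s ≤ t := by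
  obtain ⟨y, hy0, hy⟩ := exists_v_eq v hint hsurj hs
  exact e_le_e.mp (hy ▸ h (mem_ILE v hint |>.mpr hy.le))

lemma ILE_le_ILT_real {s t : ℝ} (hs : s ≤ 0) (h : ILE v hint s ≤ ILT v hint t) : s < t := by
  obtain ⟨y, hy0, hy⟩ := exists_v_eq v hint hsurj hs
  exact e_lt_e.mp (hy ▸ h (mem_ILE v hint |>.mpr hy.le))

lemma ILT_le_ILE_real {s t : ℝ} (hs : s ≤ 0) (h : ILT v hint s ≤ ILE v hint t) : s ≤ t := by
  by_contra hc
  push_neg at hc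
  set γ := (max t (s - 1) + s) / 2 with hγ
  have h1 : max t (s - 1) < s := max_lt hc (by linarith)
  have h2 : γ < s := by simp only [hγ]; linarith
  have h3 : t < γ := by have := le_max_left t (s - 1); simp only [hγ]; linarith
  obtain ⟨y, hy0, hy⟩ := exists_v_eq v hint hsurj (by linarith : γ ≤ 0)
  have := h (mem_ILT v hint |>.mpr (hy ▸ e_lt_e.mpr h2))
  rw [mem_ILE, hy] at this
  exact absurd (e_le_e.mp this) (not_le.mpr h3)

lemma ILT_le_ILT_real {s t : ℝ} (hs : s ≤ 0) (h : ILT v hint s ≤ ILT v hint t) : s ≤ t := by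
  by_contra hc
  push_neg at hc
  set γ := (max t (s - 1) + s) / 2 with hγ
  have h1 : max t (s - 1) < s := max_lt hc (by linarith)
  have h2 : γ < s := by simp only [hγ]; linarith
  have h3 : t < γ := by have := le_max_left t (s - 1); simp only [hγ]; linarith
  obtain ⟨y, hy0, hy⟩ := exists_v_eq v hint hsurj (by linarith : γ ≤ 0)
  have := h (mem_ILT v hint |>.mpr (hy ▸ e_lt_e.mpr h2))
  rw [mem_ILT, hy] at this
  exact absurd (e_lt_e.mp this) (not_lt.mpr h3.le)

lemma ILE_mul_ILE {s t : ℝ} (hs : s ≤ 0) (ht : t ≤ 0) :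
    ILE v hint s * ILE v hint t = ILE v hint (s + t) := by
  apply le_antisymm
  · refine Ideal.mul_le.mpr fun a ha b hb => ?_
    rw [mem_ILE, map_mul, v.map_mul, e_add]
    exact mul_le_mul' ha hb
  · intro r hr
    rw [mem_ILE] at hr
    obtain ⟨y, hy0, hy⟩ := exists_v_eq v hint hsurj hs
    have hle : v (algebraMap R (FractionRing R) r) ≤ v (algebraMap R (FractionRing R) y) := by
      rw [hy]; exact le_trans hr (e_le_e.mpr (by linarith))
    obtain ⟨c, rfl, hvc⟩ := dvd_of_v_le v hint hy0 hle
    have hc : c ∈ ILE v hint t := by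
      rw [mem_ILE]
      rw [hy, e_add] at *
      exact e_mul_le_iff.mp (by rw [hvc]; exact hr)
    exact Ideal.mul_mem_mul (mem_ILE v hint |>.mpr hy.le) hc

lemma ILE_mul_ILT {s t : ℝ} (hs : s ≤ 0) (ht : t ≤ 0) :
    ILE v hint s * ILT v hint t = ILT v hint (s + t) := by
  apply le_antisymm
  · refine Ideal.mul_le.mpr fun a ha b hb => ?_
    rw [mem_ILT, map_mul, v.map_mul, e_add]
    calc v (algebraMap R (FractionRing R) a) * v (algebraMap R (FractionRing R) b)
        ≤ e s * v (algebraMap R (FractionRing R) b) := mul_le_mul' ha le_rfl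
      _ < e s * e t := e_mul_lt_iff.mpr hb
  · intro r hr
    rw [mem_ILT] at hr
    rcases eq_or_ne r 0 with rfl | hr0
    · exact Ideal.zero_mem _
    obtain ⟨p, hp⟩ := exists_e (v_alg_ne_zero v hr0)
    have hps : p < s + t := e_lt_e.mp (hp ▸ hr)
    obtain ⟨y, hy0, hy⟩ := exists_v_eq v hint hsurj hs
    have hle : v (algebraMap R (FractionRing R) r) ≤ v (algebraMap R (FractionRing R) y) := by
      rw [hy, ← hp]; exact e_le_e.mpr (by linarith)
    obtain ⟨c, rfl, hvc⟩ := dvd_of_v_le v hint hy0 hle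
    have hc : c ∈ ILT v hint t := by
      rw [mem_ILT]
      rw [hy, e_add] at *
      exact e_mul_lt_iff.mp (by rw [hvc]; exact hr)
    exact Ideal.mul_mem_mul (mem_ILE v hint |>.mpr hy.le) hc

lemma ILT_mul_ILE {s t : ℝ} (hs : s ≤ 0) (ht : t ≤ 0) :
    ILT v hint s * ILE v hint t = ILT v hint (s + t) := by
  rw [mul_comm, ILE_mul_ILT v hint hsurj ht hs, add_comm]

lemma ILT_mul_ILT {s t : ℝ} (hs : s ≤ 0) (ht : t ≤ 0) :
    ILT v hint s * ILT v hint t = ILT v hint (s + t) := by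
  apply le_antisymm
  · refine Ideal.mul_le.mpr fun a ha b hb => ?_
    rw [mem_ILT, map_mul, v.map_mul, e_add]
    calc v (algebraMap R (FractionRing R) a) * v (algebraMap R (FractionRing R) b)
        ≤ e s * v (algebraMap R (FractionRing R) b) := mul_le_mul' ha.le le_rfl
      _ < e s * e t := e_mul_lt_iff.mpr hb
  · intro r hr
    rw [mem_ILT] at hr
    rcases eq_or_ne r 0 with rfl | hr0
    · exact Ideal.zero_mem _
    obtain ⟨p, hp⟩ := exists_e (v_alg_ne_zero v hr0)
    have hps : p < s + t := e_lt_e.mp (hp ▸ hr)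
    set γ := (p - t + s) / 2 with hγ
    have hγ1 : p - t < γ := by simp only [hγ]; linarith
    have hγ2 : γ < s := by simp only [hγ]; linarith
    have hγ3 : p ≤ γ := by simp only [hγ]; linarith
    obtain ⟨y, hy0, hy⟩ := exists_v_eq v hint hsurj (by linarith : γ ≤ 0)
    have hle : v (algebraMap R (FractionRing R) r) ≤ v (algebraMap R (FractionRing R) y) := by
      rw [hy, ← hp]; exact e_le_e.mpr hγ3
    obtain ⟨c, rfl, hvc⟩ := dvd_of_v_le v hint hy0 hle
    have hc : c ∈ ILT v hint t := by
      rw [mem_ILT]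
      have : e γ * v (algebraMap R (FractionRing R) c) < e γ * e t := by
        rw [← hy, hvc, ← hp, hy, ← e_add]
        exact e_lt_e.mpr (by linarith)
      exact e_mul_lt_iff.mp this
    exact Ideal.mul_mem_mul (mem_ILT v hint |>.mpr (hy ▸ e_lt_e.mpr hγ2)) hc


lemma ideal_structure (J : Ideal R) (hJ : J ≠ ⊥) :
    ∃ s : ℝ, s ≤ 0 ∧ (J = ILE v hint s ∨ J = ILT v hint s) := by
  set T := {t : ℝ | ∃ r : R, r ∈ J ∧ r ≠ 0 ∧ v (algebraMap R (FractionRing R) r) = e t} with hT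
  obtain ⟨r₀, hr₀J, hr₀⟩ := Submodule.exists_mem_ne_zero_of_ne_bot hJ
  obtain ⟨t₀, ht₀⟩ := exists_e (v_alg_ne_zero v hr₀)
  have hTne : T.Nonempty := ⟨t₀, r₀, hr₀J, hr₀, ht₀.symm⟩
  have hTbd : ∀ t ∈ T, t ≤ 0 := by
    rintro t ⟨r, hrJ, hr0, hrt⟩
    have := v_alg_le_one v hint r
    rw [hrt, ← e_zero] at this
    exact e_le_e.mp this
  have hbdd : BddAbove T := ⟨0, hTbd⟩
  set s := sSup T with hs
  have hs0 : s ≤ 0 := csSup_le hTne hTbd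
  have hsub : J ≤ ILE v hint s := by
    intro r hrJ
    rcases eq_or_ne r 0 with rfl | hr0
    · exact Ideal.zero_mem _
    obtain ⟨t, ht⟩ := exists_e (v_alg_ne_zero v hr0)
    have : t ≤ s := le_csSup hbdd ⟨r, hrJ, hr0, ht.symm⟩
    rw [mem_ILE, ← ht]
    exact e_le_e.mpr this
  refine ⟨s, hs0, ?_⟩
  by_cases hatt : ∃ r ∈ J, v (algebraMap R (FractionRing R) r) = e s
  · left
    obtain ⟨r₁, hr₁J, hr₁⟩ := hatt
    have hr₁0 : r₁ ≠ 0 := by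
      intro h0
      rw [h0, map_zero, map_zero] at hr₁
      exact e_ne_zero s hr₁.symm
    refine le_antisymm hsub fun x hx => ?_
    rw [mem_ILE, ← hr₁] at hx
    obtain ⟨c, rfl, -⟩ := dvd_of_v_le v hint hr₁0 hx
    exact Ideal.mul_mem_right c J hr₁J
  · right
    push_neg at hatt
    refine le_antisymm (fun r hrJ => ?_) (fun x hx => ?_)
    · rcases eq_or_ne r 0 with rfl | hr0
      · exact Ideal.zero_mem _
      obtain ⟨t, ht⟩ := exists_e (v_alg_ne_zero v hr0)
      have hts : t ≤ s := le_csSup hbdd ⟨r, hrJ, hr0, ht.symm⟩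
      have htne : t ≠ s := fun h => hatt r hrJ (by rw [← ht, h])
      rw [mem_ILT, ← ht]
      exact e_lt_e.mpr (lt_of_le_of_ne hts htne)
    · rcases eq_or_ne x 0 with rfl | hx0
      · exact Ideal.zero_mem _
      obtain ⟨p, hp⟩ := exists_e (v_alg_ne_zero v hx0)
      have hps : p < s := e_lt_e.mp (by rw [hp]; exact hx)
      obtain ⟨t', ht'T, hpt'⟩ := exists_lt_of_lt_csSup hTne (hs ▸ hps)
      obtain ⟨r₁, hr₁J, hr₁0, hr₁⟩ := ht'T
      have hle : v (algebraMap R (FractionRing R) x) ≤ v (algebraMap R (FractionRing R) r₁) := by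
        rw [hr₁, ← hp]
        exact e_le_e.mpr hpt'.le
      obtain ⟨c, rfl, -⟩ := dvd_of_v_le v hint hr₁0 hle
      exact Ideal.mul_mem_right c J hr₁J

end SharpAux

open SharpAux

/-- A valuation domain whose value group is order-isomorphic to `ℝ` (witnessed by a
surjective valuation on the fraction field whose ring of integers is `R`) is sharp. -/
theorem valuation_real_valueGroup_sharp (R : Type*) [CommRing R] [IsDomain R]
    [ValuationRing R]
    (v : Valuation (FractionRing R) (WithZero (Multiplicative ℝ)))
    (hint : ∀ x : FractionRing R, v x ≤ 1 ↔ x ∈ (algebraMap R (FractionRing R)).range)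
    (hsurj : Function.Surjective v) :
    IsSharpDomain R := by
  intro I A B hI hA hB hAB
  obtain ⟨a, ha0, hAe⟩ := ideal_structure v hint hsurj A hA
  obtain ⟨b, hb0, hBe⟩ := ideal_structure v hint hsurj B hB
  obtain ⟨s, hs0, hIe⟩ := ideal_structure v hint hsurj I hI
  rcases hIe with hIe | hIe
  · -- I = ILE s
    have key : a + b ≤ s := by
      rcases hAe with hAe | hAe <;> rcases hBe with hBe | hBe <;>
        rw [hAe, hBe, hIe] at hAB
      · exact ILE_le_ILE_real v hint hsurj (by linarith)
          (by rwa [ILE_mul_ILE v hint hsurj ha0 hb0] at hAB)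
      · exact ILT_le_ILE_real v hint hsurj (by linarith)
          (by rwa [ILE_mul_ILT v hint hsurj ha0 hb0] at hAB)
      · exact ILT_le_ILE_real v hint hsurj (by linarith)
          (by rwa [ILT_mul_ILE v hint hsurj ha0 hb0] at hAB)
      · exact ILT_le_ILE_real v hint hsurj (by linarith)
          (by rwa [ILT_mul_ILT v hint hsurj ha0 hb0] at hAB)
    have hβ0 : max b s ≤ 0 := max_le hb0 hs0
    have hβs : s ≤ max b s := le_max_right b s
    have hbβ : b ≤ max b s := le_max_left b s
    have hα0 : s - max b s ≤ 0 := by linarith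
    have haα : a ≤ s - max b s := by
      have : max b s ≤ s - a := max_le (by linarith) (by linarith)
      linarith
    refine ⟨ILE v hint (s - max b s), ILE v hint (max b s), ?_, ?_, ?_⟩
    · rcases hAe with hAe | hAe <;> rw [hAe]
      · exact ILE_mono v hint haα
      · exact ILT_le_ILE v hint haα
    · rcases hBe with hBe | hBe <;> rw [hBe]
      · exact ILE_mono v hint hbβ
      · exact ILT_le_ILE v hint hbβ
    · rw [hIe, ILE_mul_ILE v hint hsurj hα0 hβ0,
        show s - max b s + max b s = s by ring]
  · -- I = ILT s
    rcases hBe with hBe | hBe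
    · rcases hAe with hAe | hAe
      · -- A = ILE a, B = ILE b
        have key : a + b < s := by
          rw [hAe, hBe, hIe, ILE_mul_ILE v hint hsurj ha0 hb0] at hAB
          exact ILE_le_ILT_real v hint hsurj (by linarith) hAB
        rcases lt_or_eq_of_le hb0 with hblt | hbeq
        · have hβ0 : min (s - a) 0 ≤ 0 := min_le_right _ _
          have hbβ : b < min (s - a) 0 := lt_min (by linarith) hblt
          have hsβ : s ≤ min (s - a) 0 := le_min (by linarith) hs0
          have hα0 : s - min (s - a) 0 ≤ 0 := by linarith
          have haα : a ≤ s - min (s - a) 0 := by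
            have := min_le_left (s - a) 0; linarith
          refine ⟨ILE v hint (s - min (s - a) 0), ILT v hint (min (s - a) 0), ?_, ?_, ?_⟩
          · rw [hAe]; exact ILE_mono v hint haα
          · rw [hBe]; exact ILE_le_ILT v hint hbβ
          · rw [hIe, ILE_mul_ILT v hint hsurj hα0 hβ0,
              show s - min (s - a) 0 + min (s - a) 0 = s by ring]
        · refine ⟨ILT v hint s, ILE v hint 0, ?_, ?_, ?_⟩
          · rw [hAe]; exact ILE_le_ILT v hint (by linarith)
          · rw [hBe]; exact ILE_mono v hint (by linarith)
          · rw [hIe, ILT_mul_ILE v hint hsurj hs0 le_rfl, add_zero]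
      · -- A = ILT a, B = ILE b
        have key : a + b ≤ s := by
          rw [hAe, hBe, hIe, ILT_mul_ILE v hint hsurj ha0 hb0] at hAB
          exact ILT_le_ILT_real v hint hsurj (by linarith) hAB
        have hα0 : max a s ≤ 0 := max_le ha0 hs0
        have haα : a ≤ max a s := le_max_left a s
        have hαs : s ≤ max a s := le_max_right a s
        have hβ0 : s - max a s ≤ 0 := by linarith
        have hbβ : b ≤ s - max a s := by
          have : max a s ≤ s - b := max_le (by linarith) (by linarith)
          linarith
        refine ⟨ILT v hint (max a s), ILE v hint (s - max a s), ?_, ?_, ?_⟩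
        · rw [hAe]; exact ILT_mono v hint haα
        · rw [hBe]; exact ILE_mono v hint hbβ
        · rw [hIe, ILT_mul_ILE v hint hsurj hα0 hβ0,
            show max a s + (s - max a s) = s by ring]
    · -- B = ILT b
      have key : a + b ≤ s := by
        rcases hAe with hAe | hAe <;> rw [hAe, hBe, hIe] at hAB
        · exact ILT_le_ILT_real v hint hsurj (by linarith)
            (by rwa [ILE_mul_ILT v hint hsurj ha0 hb0] at hAB)
        · exact ILT_le_ILT_real v hint hsurj (by linarith)
            (by rwa [ILT_mul_ILT v hint hsurj ha0 hb0] at hAB)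
      have hβ0 : max b s ≤ 0 := max_le hb0 hs0
      have hβs : s ≤ max b s := le_max_right b s
      have hbβ : b ≤ max b s := le_max_left b s
      have hα0 : s - max b s ≤ 0 := by linarith
      have haα : a ≤ s - max b s := by
        have : max b s ≤ s - a := max_le (by linarith) (by linarith)
        linarith
      refine ⟨ILE v hint (s - max b s), ILT v hint (max b s), ?_, ?_, ?_⟩
      · rcases hAe with hAe | hAe <;> rw [hAe]
        · exact ILE_mono v hint haα
        · exact ILT_le_ILE v hint haα
      · rw [hBe]; exact ILT_mono v hint hbβ
      · rw [hIe, ILE_mul_ILT v hint hsurj hα0 hβ0,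
          show s - max b s + max b s = s by ring]
end

section
/- If D is a sharp domain and S is a multiplicative subset of D not containing 0, then the localization D_S is a sharp domain. -/
/-! Every ideal `J` of a localization is the extension of its contraction, so the sharpness
condition for `J ⊇ A * B` follows by extending a factorization of the contraction of `J`. -/

namespace IsLocalization

variable {R S : Type*} [CommRing R] [CommRing S] [Algebra R S]

theorem under_ne_bot (M : Submonoid R) [IsLocalization M S] {J : Ideal S} (hJ : J ≠ ⊥) :
    J.under R ≠ ⊥ := fun h =>
  hJ (by rw [← map_under M S J, h, Ideal.map_bot])

theorem le_map_of_under_le (M : Submonoid R) [IsLocalization M S] {J : Ideal S} {K : Ideal R}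
    (h : J.under R ≤ K) :
    J ≤ K.map (algebraMap R S) :=
  map_under M S J ▸ Ideal.map_mono h

theorem isSharpDomain (M : Submonoid R) [IsLocalization M S] (h : IsSharpDomain R) :
    IsSharpDomain S := by
  intro I A B hI hA hB hAB
  have hunder : A.under R * B.under R ≤ I.under R :=
    (Ideal.le_comap_mul _).trans (Ideal.comap_mono hAB)
  obtain ⟨A', B', hA', hB', hI'⟩ := h _ _ _ (under_ne_bot M hI) (under_ne_bot M hA)
    (under_ne_bot M hB) hunder
  refine ⟨A'.map (algebraMap R S), B'.map (algebraMap R S), le_map_of_under_le M hA',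
    le_map_of_under_le M hB', ?_⟩
  rw [← map_under M S I, hI', Ideal.map_mul]

end IsLocalization

theorem sharp_localization (R : Type*) [CommRing R] [IsDomain R]
    (h : IsSharpDomain R) (S : Submonoid R) (hS : (0 : R) ∉ S) :
    IsDomain (Localization S) ∧ IsSharpDomain (Localization S) :=
  ⟨IsLocalization.isDomain_localization (le_nonZeroDivisors_of_noZeroDivisors hS),
    IsLocalization.isSharpDomain S h⟩
end

section
/- Let D be a sharp domain and x, y nonzero elements of D with xD ∩ yD = xyD. Then xD + yD = D. -/
theorem sharp_vCoprime_coprime (R : Type*) [CommRing R] [IsDomain R]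
    (h : IsSharpDomain R) (x y : R) (hx : x ≠ 0) (hy : y ≠ 0)
    (hv : Ideal.span {x} ⊓ Ideal.span {y} = Ideal.span {x * y}) :
    Ideal.span {x} ⊔ Ideal.span {y} = ⊤ := by
  set sx : Ideal R := Ideal.span {x} with hsx
  set sy : Ideal R := Ideal.span {y} with hsy
  -- key cancellation lemmas from v-coprimality
  have keyx : ∀ t : R, x * t ∈ sy → t ∈ sy := by
    intro t ht
    have h1 : x * t ∈ Ideal.span {x * y} := by
      rw [← hv]
      exact Submodule.mem_inf.2 ⟨Ideal.mem_span_singleton.2 ⟨t, rfl⟩, ht⟩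
    obtain ⟨c, hc⟩ := Ideal.mem_span_singleton.1 h1
    refine Ideal.mem_span_singleton.2 ⟨c, ?_⟩
    apply mul_left_cancel₀ hx
    rw [hc]; ring
  have keyy : ∀ t : R, y * t ∈ sx → t ∈ sx := by
    intro t ht
    have h1 : y * t ∈ Ideal.span {x * y} := by
      rw [← hv]
      exact Submodule.mem_inf.2 ⟨ht, Ideal.mem_span_singleton.2 ⟨t, rfl⟩⟩
    obtain ⟨c, hc⟩ := Ideal.mem_span_singleton.1 h1
    refine Ideal.mem_span_singleton.2 ⟨c, ?_⟩
    apply mul_left_cancel₀ hy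
    rw [hc]; ring
  set I : Ideal R := Ideal.span {x + y} ⊔ Ideal.span {x * y} with hI
  have hxyI : x * y ∈ I := Submodule.mem_sup_right (Ideal.mem_span_singleton_self (x * y))
  have hIne : I ≠ ⊥ := by
    intro hbot
    rw [hbot] at hxyI
    exact mul_ne_zero hx hy (Ideal.mem_bot.1 hxyI)
  have hsxne : sx ≠ ⊥ := by
    simpa [hsx, Ideal.span_singleton_eq_bot] using hx
  have hsyne : sy ≠ ⊥ := by
    simpa [hsy, Ideal.span_singleton_eq_bot] using hy
  have hmul : sx * sy ≤ I := by
    rw [hsx, hsy, Ideal.span_singleton_mul_span_singleton]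
    exact le_sup_right
  obtain ⟨A', B', hA', hB', hIeq⟩ := h I sx sy hIne hsxne hsyne hmul
  have hxA : x ∈ A' := hA' (Ideal.mem_span_singleton_self x)
  have hyB : y ∈ B' := hB' (Ideal.mem_span_singleton_self y)
  set H : Ideal R := sx ⊔ sy with hH
  -- A' ≤ H
  have hAH : A' ≤ H := by
    intro a ha
    have hay : a * y ∈ I := by
      rw [hIeq]; exact Ideal.mul_mem_mul ha hyB
    obtain ⟨u, hu, v, hvv, huv⟩ := Submodule.mem_sup.1 hay
    obtain ⟨s, hs⟩ := Ideal.mem_span_singleton.1 hu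
    obtain ⟨t, ht⟩ := Ideal.mem_span_singleton.1 hvv
    -- (x+y)*s + x*y*t = a*y
    have hsum : (x + y) * s + x * y * t = a * y := by rw [← hs, ← ht]; exact huv
    have hxs : x * s ∈ sy := Ideal.mem_span_singleton.2
      ⟨a - s - x * t, by linear_combination hsum⟩
    obtain ⟨c, hc⟩ := Ideal.mem_span_singleton.1 (keyx s hxs)
    have ha' : a = x * (c + t) + y * c := by
      apply mul_left_cancel₀ hy
      linear_combination -hsum + (x + y) * hc
    refine Submodule.mem_sup.2 ⟨x * (c + t), Ideal.mem_span_singleton.2 ⟨c + t, rfl⟩,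
      y * c, Ideal.mem_span_singleton.2 ⟨c, rfl⟩, ha'.symm⟩
  -- B' ≤ H
  have hBH : B' ≤ H := by
    intro b hb
    have hbx : x * b ∈ I := by
      rw [hIeq]; exact Ideal.mul_mem_mul hxA hb
    obtain ⟨u, hu, v, hvv, huv⟩ := Submodule.mem_sup.1 hbx
    obtain ⟨s, hs⟩ := Ideal.mem_span_singleton.1 hu
    obtain ⟨t, ht⟩ := Ideal.mem_span_singleton.1 hvv
    have hsum : (x + y) * s + x * y * t = x * b := by rw [← hs, ← ht]; exact huv
    have hys : y * s ∈ sx := Ideal.mem_span_singleton.2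
      ⟨b - s - y * t, by linear_combination hsum⟩
    obtain ⟨c, hc⟩ := Ideal.mem_span_singleton.1 (keyy s hys)
    have hb' : b = x * c + y * (c + t) := by
      apply mul_left_cancel₀ hx
      linear_combination -hsum + (x + y) * hc
    refine Submodule.mem_sup.2 ⟨x * c, Ideal.mem_span_singleton.2 ⟨c, rfl⟩,
      y * (c + t), Ideal.mem_span_singleton.2 ⟨c + t, rfl⟩, hb'.symm⟩
  -- hence x + y ∈ H * H
  have hxyH2 : x + y ∈ H * H := by
    have : x + y ∈ I := Submodule.mem_sup_left (Ideal.mem_span_singleton_self (x + y))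
    exact Ideal.mul_mono hAH hBH (hIeq ▸ this)
  -- expand H * H
  have hHH : H * H = (Ideal.span {x * x} ⊔ Ideal.span {x * y}) ⊔
      (Ideal.span {y * x} ⊔ Ideal.span {y * y}) := by
    rw [hH, Ideal.sup_mul, Ideal.mul_sup, Ideal.mul_sup, hsx, hsy,
      Ideal.span_singleton_mul_span_singleton, Ideal.span_singleton_mul_span_singleton,
      Ideal.span_singleton_mul_span_singleton, Ideal.span_singleton_mul_span_singleton]
  rw [hHH] at hxyH2
  obtain ⟨u, hu, v, hvv, huv⟩ := Submodule.mem_sup.1 hxyH2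
  obtain ⟨u1, hu1, u2, hu2, hu12⟩ := Submodule.mem_sup.1 hu
  obtain ⟨v1, hv1, v2, hv2, hv12⟩ := Submodule.mem_sup.1 hvv
  obtain ⟨a, ha⟩ := Ideal.mem_span_singleton.1 hu1
  obtain ⟨b, hb⟩ := Ideal.mem_span_singleton.1 hu2
  obtain ⟨c, hc⟩ := Ideal.mem_span_singleton.1 hv1
  obtain ⟨d, hd⟩ := Ideal.mem_span_singleton.1 hv2
  have hsum : x * x * a + x * y * b + (y * x * c + y * y * d) = x + y := by
    rw [← ha, ← hb, ← hc, ← hd, hu12, hv12]; exact huv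
  have hkey : x * (1 - x * a - y * b - y * c) ∈ sy :=
    Ideal.mem_span_singleton.2 ⟨y * d - 1, by linear_combination -hsum⟩
  obtain ⟨e, he⟩ := Ideal.mem_span_singleton.1 (keyx _ hkey)
  have hone : (1 : R) ∈ H := by
    refine Submodule.mem_sup.2 ⟨x * a, Ideal.mem_span_singleton.2 ⟨a, rfl⟩,
      y * (b + c + e), Ideal.mem_span_singleton.2 ⟨b + c + e, rfl⟩, ?_⟩
    linear_combination -he
  exact Ideal.eq_top_iff_one H |>.2 hone
end

section
/- Let D be a domain and x, y nonzero elements with xD : yD = xD. Then (x², y) : (x, y) = (x, y). -/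
/-! If `a (x, y) ⊆ (x², y)`, write `a x = b x² + c y`; then `c y ∈ (x)`, so `c = d x` because
`(x) : (y) = (x)`, and cancelling `x` in `x (a - b x - d y) = 0` gives `a = b x + d y`. -/

namespace Ideal

variable {R : Type*}

theorem span_pair_le_colon_span_sq_pair [CommRing R] (x y : R) :
    span {x, y} ≤ (span {x ^ 2, y}).colon (span {x, y} : Set R) := by
  intro a ha
  obtain ⟨s, t, rfl⟩ := mem_span_pair.mp ha
  simp only [colon_span, Submodule.mem_colon, Set.mem_insert_iff, Set.mem_singleton_iff,
    forall_eq_or_imp, forall_eq, smul_eq_mul, mem_span_pair]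
  exact ⟨⟨s, t * x, by ring⟩, ⟨0, s * x + t * y, by ring⟩⟩

theorem mem_span_pair_of_mul_mem_span_sq_pair [CommRing R] [IsDomain R] {x y a : R}
    (hx : x ≠ 0) (hxy : (span {x}).colon (span {y} : Set R) ≤ span {x})
    (ha : a * x ∈ span {x ^ 2, y}) : a ∈ span {x, y} := by
  obtain ⟨b, c, hbc⟩ := mem_span_pair.mp ha
  have hc : c ∈ span {x} :=
    hxy <| mem_colon_span_singleton.mpr <| mem_span_singleton'.mpr ⟨a - b * x, by
      linear_combination -hbc⟩
  obtain ⟨d, rfl⟩ := mem_span_singleton'.mp hc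
  have hab : a = b * x + d * y := mul_right_cancel₀ hx (by linear_combination -hbc)
  exact mem_span_pair.mpr ⟨b, d, hab.symm⟩

end Ideal

theorem colon_sq_general (R : Type*) [CommRing R] [IsDomain R]
    (x y : R) (hx : x ≠ 0)
    (hv : (Ideal.span {x}).colon (Ideal.span {y}) = Ideal.span {x}) :
    (Ideal.span {x ^ 2, y}).colon (Ideal.span {x, y}) = Ideal.span {x, y} := by
  refine le_antisymm (fun a ha => ?_) (Ideal.span_pair_le_colon_span_sq_pair x y)
  exact Ideal.mem_span_pair_of_mul_mem_span_sq_pair hx hv.le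
    (Submodule.mem_colon.mp ha x (Ideal.subset_span (Set.mem_insert x {y})))

theorem colon_sq (R : Type*) [CommRing R] [IsDomain R]
    (x y : R) (hx : x ≠ 0) (hy : y ≠ 0)
    (hv : (Ideal.span {x}).colon (Ideal.span {y}) = Ideal.span {x}) :
    (Ideal.span {x ^ 2, y}).colon (Ideal.span {x, y}) = Ideal.span {x, y} :=
  colon_sq_general R x y hx hv
end

section
/- Let D be a domain and x, y nonzero elements with xD ∩ yD = xyD. If (x², y) = (x, y)², then xD + yD = D. -/
theorem coprime_of_sq (R : Type*) [CommRing R] [IsDomain R]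
    (x y : R) (hx : x ≠ 0) (hy : y ≠ 0)
    (hv : Ideal.span {x} ⊓ Ideal.span {y} = Ideal.span {x * y})
    (hsq : Ideal.span {x ^ 2, y} = (Ideal.span {x, y}) ^ 2) :
    Ideal.span {x} ⊔ Ideal.span {y} = ⊤ := by
  -- Step 1: y ∈ (x,y)^2 ≤ span {x*x, x*y, y*y}
  have hle : (Ideal.span {x, y} : Ideal R) ^ 2 ≤ Ideal.span {x*x, x*y, y*y} := by
    rw [pow_two, Ideal.span_mul_span']
    apply Ideal.span_le.mpr
    rintro z ⟨a, ha, b, hb, rfl⟩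
    simp only [Set.mem_insert_iff, Set.mem_singleton_iff] at ha hb
    rcases ha with rfl | rfl <;> rcases hb with rfl | rfl
    · exact Ideal.subset_span (by simp)
    · exact Ideal.subset_span (by simp)
    · exact Ideal.subset_span (by simp [mul_comm])
    · exact Ideal.subset_span (by simp)
  have hy2 : y ∈ Ideal.span ({x*x, x*y, y*y} : Set R) := by
    apply hle
    rw [← hsq]
    exact Ideal.subset_span (by simp)
  rw [Ideal.mem_span_insert] at hy2
  obtain ⟨a, z, hz, hzy⟩ := hy2
  rw [Ideal.mem_span_insert] at hz
  obtain ⟨b, w, hw, hwz⟩ := hz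
  rw [Ideal.mem_span_singleton] at hw
  obtain ⟨c, rfl⟩ := hw
  subst hwz
  -- hzy : y = a*(x*x) + (b*(x*y) + y*y*c)
  -- y*(1 - b*x - y*c) = a*x*x ∈ (x) ⊓ (y) = (x*y)
  have key : y * (1 - b*x - y*c) ∈ Ideal.span {x} ⊓ Ideal.span {y} := by
    refine Submodule.mem_inf.mpr ⟨?_, ?_⟩
    · have h : y * (1 - b*x - y*c) = x * (a*x) := by linear_combination hzy
      rw [h, Ideal.mem_span_singleton]
      exact Dvd.intro _ rfl
    · rw [Ideal.mem_span_singleton]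
      exact Dvd.intro _ rfl
  rw [hv, Ideal.mem_span_singleton] at key
  obtain ⟨e, he⟩ := key
  -- cancel y: 1 - b*x - y*c = x*e
  have hcancel : 1 - b*x - y*c = x * e := by
    apply mul_left_cancel₀ hy
    rw [he]; ring
  -- so 1 = (b + e)*x + c*y
  rw [Ideal.eq_top_iff_one, Submodule.mem_sup]
  refine ⟨(b + e) * x, Ideal.mem_span_singleton.mpr ⟨b + e, mul_comm _ _⟩,
          c * y, Ideal.mem_span_singleton.mpr ⟨c, mul_comm _ _⟩, ?_⟩
  linear_combination -hcancel
end

section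
/- If a sharp domain is Noetherian, then it is a Dedekind domain. -/
open Ideal

namespace Ideal

variable {R : Type*} [CommRing R]

theorem eq_bot_of_le_mul_of_ne_top [IsNoetherianRing R] [IsDomain R] {I J : Ideal R}
    (hJ : J ≠ ⊤) (h : I ≤ J * I) : I = ⊥ := by
  have hpow : ∀ n : ℕ, I ≤ J ^ n := by
    intro n
    induction n with
    | zero => simp
    | succ n ih => exact h.trans ((mul_mono_right ih).trans_eq (pow_succ' J n).symm)
  exact eq_bot_iff.2 ((le_iInf hpow).trans (J.iInf_pow_eq_bot_of_isDomain hJ).le)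

theorem span_singleton_mul_colon_le [IsDomain R] {p q c : R} {C : Ideal R} (hq : q ≠ 0)
    (hc : c ∈ C) (hc0 : c ≠ 0) (hpq : span {p} * C ≤ span {q} * C) :
    span {p} * (span {c}).colon C ≤ span {q} * (span {c}).colon C := by
  have hpC : ∀ z ∈ C, ∃ z' ∈ C, q * z' = p * z := fun z hz =>
    mem_span_singleton_mul.1 (hpq (mul_mem_mul (mem_span_singleton_self p) hz))
  rw [span_singleton_mul_le_iff]
  intro y hy
  have hyC : ∀ z ∈ C, c ∣ y * z := fun z hz =>
    mem_span_singleton.1 (Submodule.mem_colon.1 hy z hz)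
  obtain ⟨c', hc', hpc⟩ := hpC c hc
  obtain ⟨t, ht⟩ := hyC c' hc'
  have hpy : q * t = p * y := mul_left_cancel₀ hc0 (by linear_combination (-q) * ht + y * hpc)
  refine mem_span_singleton_mul.2 ⟨t, Submodule.mem_colon.2 fun z hz => ?_, hpy⟩
  obtain ⟨z', hz', hpz⟩ := hpC z hz
  obtain ⟨s, hs⟩ := hyC z' hz'
  exact mem_span_singleton.2 ⟨s, mul_left_cancel₀ hq (by
    rw [smul_eq_mul]; linear_combination z * hpy - y * hpz + q * hs)⟩

theorem sup_span_singleton_mul_self_le (P : Ideal R) (b : R) :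
    (P ⊔ span {b}) * (P ⊔ span {b}) ≤ P ⊔ span {b ^ 2} := by
  rw [mul_sup, sup_mul, sup_mul, span_singleton_mul_span_singleton, sq]
  exact sup_le ((sup_le mul_le_left mul_le_right).trans le_sup_left)
    (sup_le_sup_right mul_le_left _)

variable {P : Ideal R} [hP : P.IsPrime] {b : R}

theorem mem_sup_span_singleton_of_mul_mem (hb : b ∉ P) {a : R}
    (h : a * b ∈ P ⊔ span {b ^ 2}) : a ∈ P ⊔ span {b} := by
  obtain ⟨x, hx, _, hz, hxz⟩ := Submodule.mem_sup.1 h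
  obtain ⟨s, rfl⟩ := mem_span_singleton'.1 hz
  have hsb : (a - s * b) * b ∈ P := by rwa [show (a - s * b) * b = x by linear_combination -hxz]
  rw [show a = (a - s * b) + s * b by ring]
  exact add_mem (Submodule.mem_sup_left ((hP.mem_or_mem hsb).resolve_right hb))
    (Submodule.mem_sup_right (mul_mem_left _ _ (mem_span_singleton_self b)))

theorem le_sup_span_singleton_mul_of_le_mul_self (hb : b ∉ P)
    (h : P ≤ (P ⊔ span {b}) * (P ⊔ span {b})) : P ≤ (P ⊔ span {b}) * P := by
  intro x hx
  have hx' := h hx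
  rw [mul_sup] at hx'
  obtain ⟨u, hu, _, hv, rfl⟩ := Submodule.mem_sup.1 hx'
  obtain ⟨w, -, rfl⟩ := mem_mul_span_singleton.1 hv
  have hwb : w * b ∈ P := by
    simpa only [add_sub_cancel_left] using P.sub_mem hx (mul_le_right hu)
  have hwP : w ∈ P := (hP.mem_or_mem hwb).resolve_right hb
  refine add_mem hu ?_
  rw [mul_comm w b]
  exact mul_mem_mul (Submodule.mem_sup_right (mem_span_singleton_self b)) hwP

end Ideal

theorem IsIntegral.exists_ideal_ne_bot_span_singleton_mul_le {R K : Type*} [CommRing R]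
    [IsDomain R] [Field K] [Algebra R K] [IsFractionRing R K] {p q : R} (hq : q ≠ 0)
    (hx : IsIntegral R (algebraMap R K p / algebraMap R K q)) :
    ∃ C : Ideal R, C ≠ ⊥ ∧ span {p} * C ≤ span {q} * C := by
  set x := algebraMap R K p / algebraMap R K q with hx_def
  obtain ⟨a, ha, hInt⟩ := FractionalIdeal.isFractional_adjoin_integral (nonZeroDivisors R) x hx
  set C := (1 : Submodule R K).colon (Algebra.adjoin R {x} : Set K)
  have hC : ∀ r : R, r ∈ C ↔ ∀ y ∈ Algebra.adjoin R {x}, r • y ∈ (1 : Submodule R K) :=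
    fun r => Submodule.mem_colon
  have haC : a ∈ C := (hC a).2 fun y hy => Submodule.mem_one.2 (hInt y hy)
  refine ⟨C, (Submodule.ne_bot_iff C).2 ⟨a, haC, nonZeroDivisors.ne_zero ha⟩, ?_⟩
  rw [span_singleton_mul_le_iff]
  intro r hr
  have hx_mem : x ∈ Algebra.adjoin R {x} := Algebra.self_mem_adjoin_singleton R x
  obtain ⟨r', hr'⟩ := Submodule.mem_one.1 ((hC r).1 hr x hx_mem)
  have hr'C : r' ∈ C := (hC r').2 fun y hy => by
    rw [algebra_compatible_smul K r', hr', smul_assoc, smul_eq_mul]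
    exact (hC r).1 hr _ (mul_mem hx_mem hy)
  refine mem_span_singleton_mul.2 ⟨r', hr'C, IsFractionRing.injective R K ?_⟩
  have hq' : algebraMap R K q ≠ 0 := (map_ne_zero_iff _ (IsFractionRing.injective R K)).2 hq
  rw [map_mul, map_mul, hr', Algebra.smul_def, hx_def]
  field_simp

namespace IsSharpDomain

variable {R : Type*} [CommRing R]

theorem colon_dvd_span_singleton (h : IsSharpDomain R) {C : Ideal R} {c : R} (hc : c ∈ C)
    (hc0 : c ≠ 0) : (span {c}).colon C ∣ span {c} := by
  have hmul : C * (span {c}).colon C ≤ span {c} := mul_le.2 fun z hz y hy => by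
    simpa [mul_comm] using Submodule.mem_colon.1 hy z hz
  have hcolon : c ∈ (span {c}).colon C := Submodule.mem_colon.2 fun z _ =>
    mem_span_singleton.2 (dvd_mul_right c z)
  obtain ⟨A, B, hCA, hB, hAB⟩ := h _ C _ (span_singleton_eq_bot.not.2 hc0)
    ((Submodule.ne_bot_iff C).2 ⟨c, hc, hc0⟩) ((Submodule.ne_bot_iff _).2 ⟨c, hcolon, hc0⟩) hmul
  have hBcolon : B ≤ (span {c}).colon C := fun y hy => Submodule.mem_colon.2 fun z hz => by
    rw [hAB, smul_eq_mul, mul_comm y z]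
    exact mul_mem_mul (hCA hz) hy
  exact ⟨A, hAB.trans (by rw [mul_comm, le_antisymm hBcolon hB])⟩

variable [IsDomain R]

theorem dvd_of_span_singleton_mul_le (h : IsSharpDomain R) {C : Ideal R}
    (hC : C ≠ ⊥) {p q : R} (hq : q ≠ 0) (hpq : span {p} * C ≤ span {q} * C) : q ∣ p := by
  obtain ⟨c, hc, hc0⟩ := Submodule.exists_mem_ne_zero_of_ne_bot hC
  set D := (span {c}).colon (C : Set R)
  obtain ⟨A, hA⟩ := h.colon_dvd_span_singleton hc hc0
  have hle : span {p * c} ≤ span {q * c} := calc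
    span {p * c} = A * (span {p} * D) := by
      rw [← span_singleton_mul_span_singleton, hA]; ring
    _ ≤ A * (span {q} * D) := mul_mono_right (span_singleton_mul_colon_le hq hc hc0 hpq)
    _ = span {q * c} := by
      rw [← span_singleton_mul_span_singleton, hA]; ring
  exact (mul_dvd_mul_iff_right hc0).1 (span_singleton_le_span_singleton.1 hle)

theorem isIntegrallyClosed (h : IsSharpDomain R) : IsIntegrallyClosed R := by
  refine (isIntegrallyClosed_iff (FractionRing R)).2 fun {x} hx => ?_
  obtain ⟨p, q, hq, rfl⟩ := IsFractionRing.div_surjective (A := R) x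
  have hq0 : q ≠ 0 := nonZeroDivisors.ne_zero hq
  obtain ⟨C, hC, hpq⟩ := hx.exists_ideal_ne_bot_span_singleton_mul_le hq0
  obtain ⟨r, rfl⟩ := h.dvd_of_span_singleton_mul_le hC hq0 hpq
  refine ⟨r, ?_⟩
  have hq' : algebraMap R (FractionRing R) q ≠ 0 :=
    (map_ne_zero_iff _ (IsFractionRing.injective R _)).2 hq0
  rw [map_mul]
  field_simp

theorem dimensionLEOne [IsNoetherianRing R] (h : IsSharpDomain R) : Ring.DimensionLEOne R := by
  refine ⟨fun {P} hP0 hP => ?_⟩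
  by_contra hPmax
  obtain ⟨M, hM, hPM⟩ := P.exists_le_maximal hP.ne_top
  obtain ⟨b, hbM, hbP⟩ :=
    SetLike.exists_of_lt (lt_of_le_of_ne hPM (by rintro rfl; exact hPmax hM))
  set J := P ⊔ span {b}
  have hbJ : b ∈ J := Submodule.mem_sup_right (mem_span_singleton_self b)
  have hJ0 : J ≠ ⊥ := ne_bot_of_le_ne_bot hP0 le_sup_left
  have hI0 : P ⊔ span {b ^ 2} ≠ ⊥ := ne_bot_of_le_ne_bot hP0 le_sup_left
  obtain ⟨A, B, hJA, hJB, hAB⟩ := h _ J J hI0 hJ0 hJ0 (sup_span_singleton_mul_self_le P b)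
  have hA : A ≤ J := fun a ha =>
    mem_sup_span_singleton_of_mul_mem hbP (hAB ▸ mul_mem_mul ha (hJB hbJ))
  have hB : B ≤ J := fun a ha =>
    mem_sup_span_singleton_of_mul_mem hbP (hAB ▸ mul_comm a b ▸ mul_mem_mul (hJA hbJ) ha)
  have hPJ : P ≤ J * P :=
    le_sup_span_singleton_mul_of_le_mul_self hbP (le_sup_left.trans (hAB.le.trans (mul_mono hA hB)))
  have hJ : J ≠ ⊤ :=
    ne_top_of_le_ne_top hM.ne_top (sup_le hPM ((span_singleton_le_iff_mem M).2 hbM))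
  exact hP0 (eq_bot_of_le_mul_of_ne_top hJ hPJ)

end IsSharpDomain

theorem sharp_noetherian_dedekind (R : Type*) [CommRing R] [IsDomain R]
    [IsNoetherianRing R] (h : IsSharpDomain R) : IsDedekindDomain R :=
  have := h.isIntegrallyClosed
  have := h.dimensionLEOne
  { }
end

section
/- Let D be an h-local domain, A, B nonzero ideals of D, and M a maximal ideal of D. Then (A : B)·D_M = (A·D_M) : (B·D_M). -/
/-- A domain has *finite character* if every nonzero element lies in only finitely
many maximal ideals. -/
def FiniteCharacter (R : Type*) [CommRing R] : Prop :=
  ∀ x : R, x ≠ 0 → {M : Ideal R | M.IsMaximal ∧ x ∈ M}.Finite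

/-- A domain is *h-local* if it has finite character and every nonzero prime ideal
is contained in a unique maximal ideal. -/
def IsHLocal (R : Type*) [CommRing R] : Prop :=
  FiniteCharacter R ∧
    ∀ P : Ideal R, P.IsPrime → P ≠ ⊥ → ∃! M : Ideal R, M.IsMaximal ∧ P ≤ M

/-!
Only the inclusion `(A : B)_M ⊇ A_M : B_M` needs the h-local hypothesis. Given `r / s` in the
right-hand side, one looks for `t ∉ M` that lies in `A_N` for every maximal `N ≠ M`: then
`t r B ⊆ A` can be checked locally (at `M` because `r B ⊆ A_M`, at `N ≠ M` because `t ∈ A_N`), so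
`r / s = t r / t s` lies in `(A : B)_M`. For a single `N ≠ M` such a `t` exists because otherwise `A`
misses the multiplicative set `(R ∖ M)(R ∖ N)`, and a prime ideal containing `A` and missing it
would lie in both `M` and `N`. Finite character reduces to the finitely many `N` containing a fixed
nonzero `a ∈ A`, and the product of the corresponding elements works.
-/

theorem Ideal.map_colon_le {R S : Type*} [CommSemiring R] [CommSemiring S] (f : R →+* S)
    (I J : Ideal R) : (I.colon J).map f ≤ (I.map f).colon (J.map f) := by
  rw [Ideal.map_le_iff_le_comap]
  intro r hr
  rw [Ideal.mem_comap, Submodule.mem_colon]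
  suffices J.map f ≤ (I.map f).colon {f r} from fun s hs => by
    simpa [mul_comm] using Submodule.mem_colon_singleton.1 (this hs)
  rw [Ideal.map_le_iff_le_comap]
  intro j hj
  rw [Ideal.mem_comap, Submodule.mem_colon_singleton, smul_eq_mul, ← map_mul, mul_comm]
  exact Ideal.mem_map_of_mem f (Submodule.mem_colon.1 hr j hj)

namespace IsHLocal

variable {R : Type*} [CommRing R]

theorem eq_of_le_of_le (h : IsHLocal R) {P M N : Ideal R} [P.IsPrime] (hP : P ≠ ⊥)
    [M.IsMaximal] [N.IsMaximal] (hPM : P ≤ M) (hPN : P ≤ N) : M = N := by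
  obtain ⟨_, _, huniq⟩ := h.2 P ‹_› hP
  exact (huniq M ⟨‹_›, hPM⟩).trans (huniq N ⟨‹_›, hPN⟩).symm

theorem exists_notMem_algebraMap_mem_map (h : IsHLocal R) {M N : Ideal R} [M.IsMaximal]
    [N.IsMaximal] (hMN : M ≠ N) {A : Ideal R} (hA : A ≠ ⊥) :
    ∃ t ∉ M, algebraMap R (Localization.AtPrime N) t ∈
      A.map (algebraMap R (Localization.AtPrime N)) := by
  simp_rw [IsLocalization.algebraMap_mem_map_algebraMap_iff N.primeCompl]
  by_contra! hA_disj
  obtain ⟨P, hP, hAP, hP_disj⟩ :=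
    Ideal.exists_le_prime_disjoint A (M.primeCompl ⊔ N.primeCompl) <|
      Set.disjoint_left.2 fun x hxA hx => by
        obtain ⟨t, ht, u, hu, rfl⟩ := Submonoid.mem_sup.1 hx
        exact hA_disj t ht u hu (mul_comm u t ▸ hxA)
  have hP_le (Q : Ideal R) [Q.IsPrime] (hQ : Q.primeCompl ≤ M.primeCompl ⊔ N.primeCompl) :
      P ≤ Q := fun x hxP => by
    by_contra hxQ
    exact Set.disjoint_left.1 hP_disj hxP (hQ hxQ)
  exact hMN <| h.eq_of_le_of_le (ne_bot_of_le_ne_bot hA hAP)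
    (hP_le M le_sup_left) (hP_le N le_sup_right)

theorem exists_notMem_forall_algebraMap_mem_map (h : IsHLocal R) {M : Ideal R} [M.IsMaximal]
    {A : Ideal R} (hA : A ≠ ⊥) :
    ∃ t ∉ M, ∀ (N : Ideal R) (_ : N.IsMaximal), N ≠ M →
      algebraMap R (Localization.AtPrime N) t ∈ A.map (algebraMap R (Localization.AtPrime N)) := by
  obtain ⟨a, haA, ha⟩ := (Submodule.ne_bot_iff A).1 hA
  have hT (N : Ideal R) : ∃ t ∉ M, ∀ (_ : N.IsMaximal), N ≠ M →
      algebraMap R (Localization.AtPrime N) t ∈ A.map (algebraMap R _) := by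
    by_cases hN : N.IsMaximal ∧ N ≠ M
    · have := hN.1
      obtain ⟨t, htM, ht⟩ := h.exists_notMem_algebraMap_mem_map hN.2.symm hA
      exact ⟨t, htM, fun _ _ => ht⟩
    · exact ⟨1, M.primeCompl.one_mem, fun hN' hNM => absurd ⟨hN', hNM⟩ hN⟩
  choose T hTM hT using hT
  -- only the finitely many maximal ideals containing `a` need a factor: `a` is a unit elsewhere
  let S := (h.1 a ha).toFinset
  refine ⟨∏ N ∈ S, T N, by simpa [Ideal.IsPrime.prod_mem_iff] using fun N _ => hTM N, ?_⟩
  intro N hN hNM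
  by_cases haN : a ∈ N
  · have hNS : N ∈ S := (h.1 a ha).mem_toFinset.2 ⟨hN, haN⟩
    exact Ideal.mem_of_dvd _ (map_dvd _ (Finset.dvd_prod_of_mem T hNS)) (hT N hN hNM)
  · exact (IsLocalization.algebraMap_mem_map_algebraMap_iff N.primeCompl _ _ _).2
      ⟨a, haN, A.mul_mem_right _ haA⟩

end IsHLocal

theorem hlocal_colon_localization_general (R : Type*) [CommRing R]
    (h : IsHLocal R) (A B : Ideal R) (hA : A ≠ ⊥)
    (M : Ideal R) (hM : M.IsMaximal) :
    (A.colon B).map (algebraMap R (Localization.AtPrime M)) =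
      (A.map (algebraMap R (Localization.AtPrime M))).colon
        (B.map (algebraMap R (Localization.AtPrime M))) := by
  refine le_antisymm (Ideal.map_colon_le _ A B) fun x hx => ?_
  obtain ⟨⟨r, s⟩, rfl⟩ := IsLocalization.mk'_surjective M.primeCompl x
  obtain ⟨t, htM, ht⟩ := h.exists_notMem_forall_algebraMap_mem_map (M := M) hA
  have htr : t * r ∈ A.colon B := Submodule.mem_colon.2 fun b hb =>
    Ideal.mem_of_localization_maximal fun N hN => by
      rw [smul_eq_mul, map_mul, map_mul]
      by_cases hNM : N = M
      · subst hNM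
        have hxb := Submodule.mem_colon.1 hx _ (Ideal.mem_map_of_mem _ hb)
        rw [← IsLocalization.mk'_spec (Localization.AtPrime N) r s]
        convert Ideal.mul_mem_left _ (algebraMap R _ t * algebraMap R _ s) hxb using 1
        rw [smul_eq_mul]
        ring
      · rw [mul_assoc]
        exact Ideal.mul_mem_right _ _ (ht N hN hNM)
  exact (IsLocalization.mk'_mem_map_algebraMap_iff _ _ _ _ _).2 ⟨t, htM, htr⟩

theorem hlocal_colon_localization (R : Type*) [CommRing R] [IsDomain R]
    (h : IsHLocal R) (A B : Ideal R) (hA : A ≠ ⊥) (hB : B ≠ ⊥)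
    (M : Ideal R) (hM : M.IsMaximal) :
    (A.colon B).map (algebraMap R (Localization.AtPrime M)) =
      (A.map (algebraMap R (Localization.AtPrime M))).colon
        (B.map (algebraMap R (Localization.AtPrime M))) :=
  hlocal_colon_localization_general R h A B hA M hM
end

section
/- Let D be a domain of finite character such that for every maximal ideal M, the localization D_M is a valuation domain whose value group is a complete (i.e., either trivial, cyclic, or all of ℝ) subgroup of the reals. Then D is a sharp domain. -/
/-- A subset of `ℝ` is a *complete subgroup of the reals* iff it is trivial,
cyclic, or all of `ℝ`. -/
def IsCompleteRealSubgroup (S : Set ℝ) : Prop :=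
  S = {0} ∨ (∃ a : ℝ, S = {r | ∃ n : ℤ, r = n • a}) ∨ S = Set.univ

/-!
At a maximal ideal `M`, a nonzero ideal `X` is described up to contraction from `R_M` by the
supremum `c` of the values `log w(x)`, `x ∈ X`: `X R_M ∩ R` is `{w ≤ exp c}`, or `{w < exp c}`
when the supremum is not attained, which for a complete value group happens only if that group
is all of `ℝ`.
Products of such ideals add thresholds, so from `AB ⊆ I` one reads off `A'_M ⊇ A`, `B'_M ⊇ B`
with `A'_M B'_M = I` at `M`, both containing `I R_M ∩ R`.

Rank-one valuations make `R` one-dimensional; with finite character, `I R_M ∩ R` then lies in no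
maximal ideal but `M`. Hence for the finitely many `M` containing a fixed `0 ≠ x ∈ I` the
factors are pairwise comaximal, and `A' = ∏ A'_M`, `B' = ∏ B'_M` satisfy `I = A'B'` at every
maximal ideal, hence globally.
-/

lemma csSup_mem_of_subset_zmultiples {S : Set ℝ} {a : ℝ} (hS : S ⊆ {r | ∃ n : ℤ, r = n • a})
    (hne : S.Nonempty) (hbdd : BddAbove S) : sSup S ∈ S := by
  rcases eq_or_ne a 0 with rfl | ha
  · obtain rfl : S = {0} := hne.subset_singleton_iff.mp fun r hr => by
      obtain ⟨n, rfl⟩ := hS hr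
      simp
    simp
  have hb : 0 < |a| := abs_pos.mpr ha
  have hS' : ∀ r ∈ S, ∃ n : ℤ, r = n * |a| := fun r hr => by
    obtain ⟨n, rfl⟩ := hS hr
    rcases abs_choice a with h | h
    · exact ⟨n, by simp [h]⟩
    · exact ⟨-n, by simp [h]⟩
  obtain ⟨c, hc⟩ := hbdd
  obtain ⟨r₀, hr₀⟩ := hne
  obtain ⟨n₀, rfl⟩ := hS' r₀ hr₀
  obtain ⟨m, hm, hmax⟩ := Int.exists_greatest_of_bdd (P := fun n : ℤ => (n : ℝ) * |a| ∈ S)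
    ⟨⌈c / |a|⌉, fun n hn => Int.cast_le.mp (((le_div_iff₀ hb).mpr (hc hn)).trans
      (Int.le_ceil _))⟩ ⟨n₀, hr₀⟩
  rwa [IsGreatest.csSup_eq ⟨hm, fun r hr => ?_⟩]
  obtain ⟨n, rfl⟩ := hS' r hr
  exact mul_le_mul_of_nonneg_right (Int.cast_le.mpr (hmax n hr)) hb.le

lemma IsCompleteRealSubgroup.csSup_mem_or_eq_univ {Γ S : Set ℝ} (hΓ : IsCompleteRealSubgroup Γ)
    (hS : S ⊆ Γ) (hne : S.Nonempty) (hbdd : BddAbove S) : sSup S ∈ S ∨ Γ = Set.univ := by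
  rcases hΓ with rfl | ⟨a, rfl⟩ | h
  · refine Or.inl (csSup_mem_of_subset_zmultiples (a := 0) (hS.trans ?_) hne hbdd)
    rintro _ rfl
    exact ⟨0, by simp⟩
  · exact Or.inl (csSup_mem_of_subset_zmultiples hS hne hbdd)
  · exact Or.inr h

section

variable {R : Type*} [CommRing R]

namespace Ideal

/-- The contraction `X R_M ∩ R` of the extension of `X` to the localization at `M`. -/
abbrev localContraction (X M : Ideal R) [M.IsPrime] : Ideal R :=
  (X.map (algebraMap R (Localization.AtPrime M))).comap (algebraMap R (Localization.AtPrime M))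

/-- The condition defining sharpness, after localizing at `M`. The factors are asked to contain
`I R_M ∩ R`, which keeps them out of every other maximal ideal. -/
def IsSharpAt (M : Ideal R) [M.IsPrime] (I A B : Ideal R) : Prop :=
  ∃ A' B' : Ideal R, A ≤ A' ∧ B ≤ B' ∧ I.localContraction M ≤ A' ⊓ B' ∧
    (A' * B').localContraction M = I.localContraction M

lemma map_eq_map_of_localContraction_eq {X Y M : Ideal R} [M.IsPrime]
    (h : X.localContraction M = Y.localContraction M) :
    X.map (algebraMap R (Localization.AtPrime M)) =
      Y.map (algebraMap R (Localization.AtPrime M)) := by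
  rw [← IsLocalization.map_under M.primeCompl _ (X.map _),
    ← IsLocalization.map_under M.primeCompl _ (Y.map _)]
  exact congrArg _ h

def LiesOnlyIn (Z M : Ideal R) : Prop :=
  ∀ N : Ideal R, N.IsMaximal → Z ≤ N → N = M

lemma LiesOnlyIn.mul {Z Z' M : Ideal R} (h : Z.LiesOnlyIn M) (h' : Z'.LiesOnlyIn M) :
    (Z * Z').LiesOnlyIn M :=
  fun N hN hle => (hN.isPrime.mul_le.mp hle).elim (h N hN) (h' N hN)

lemma LiesOnlyIn.sup_eq_top {Z Z' M M' : Ideal R} (h : Z.LiesOnlyIn M) (h' : Z'.LiesOnlyIn M')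
    (hMM' : M ≠ M') : Z ⊔ Z' = ⊤ := by
  by_contra hne
  obtain ⟨N, hN, hle⟩ := exists_le_maximal _ hne
  exact hMM' ((h N hN (le_sup_left.trans hle)).symm.trans (h' N hN (le_sup_right.trans hle)))

lemma le_prod_of_liesOnlyIn {T : Finset (Ideal R)} {Z : Ideal R → Ideal R} {A : Ideal R}
    (hZ : ∀ M ∈ T, (Z M).LiesOnlyIn M) (hA : ∀ M ∈ T, A ≤ Z M) : A ≤ ∏ M ∈ T, Z M := by
  rw [prod_eq_iInf_of_pairwise_isCoprime fun M hM M' hM' hne =>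
    isCoprime_iff_sup_eq.mpr ((hZ M hM).sup_eq_top (hZ M' hM') hne)]
  exact le_iInf₂ hA

lemma map_prod_of_liesOnlyIn {T : Finset (Ideal R)} {Z : Ideal R → Ideal R}
    (hZ : ∀ M ∈ T, (Z M).LiesOnlyIn M) {N : Ideal R} [N.IsMaximal] (hN : N ∈ T) :
    (∏ M ∈ T, Z M).map (algebraMap R (Localization.AtPrime N)) =
      (Z N).map (algebraMap R (Localization.AtPrime N)) := by
  rw [← mapHom_apply, map_prod, Finset.prod_eq_single_of_mem N hN, mapHom_apply]
  intro M hM hMN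
  rw [mapHom_apply, one_eq_top]
  exact IsLocalization.AtPrime.map_eq_top_of_not_le _ fun hle => hMN (hZ M hM N ‹_› hle).symm

lemma prod_not_le_of_liesOnlyIn {T : Finset (Ideal R)} {Z : Ideal R → Ideal R}
    (hZ : ∀ M ∈ T, (Z M).LiesOnlyIn M) {N : Ideal R} (hN : N.IsMaximal) (hNT : N ∉ T) :
    ¬ ∏ M ∈ T, Z M ≤ N := fun hle => by
  obtain ⟨M, hM, hle⟩ := hN.isPrime.prod_le.mp hle
  exact hNT (hZ M hM N hN hle ▸ hM)

/-- Take `b ∈ N \ M`, and by prime avoidance `a ∉ N` lying in the other maximal ideals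
containing `x`; these are all the primes containing `x`, so `(b * a) ^ n ∈ (x)`. -/
theorem exists_notMem_notMem_dvd_mul [Ring.DimensionLEOne R] {x : R} (hx : x ≠ 0)
    (hfin : {P : Ideal R | P.IsMaximal ∧ x ∈ P}.Finite) {M N : Ideal R} (hM : M.IsPrime)
    (hN : N.IsMaximal) (hMN : M ≠ N) : ∃ s ∉ M, ∃ y ∉ N, x ∣ s * y := by
  classical
  obtain ⟨b, hbN, hbM⟩ := SetLike.not_le_iff_exists.mp fun h => hMN (hN.eq_of_le hM.ne_top h).symm
  set T := hfin.toFinset.erase N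
  have hTN : ¬ T.inf id ≤ N := fun h => by
    obtain ⟨P, hP, hPN⟩ := hN.isPrime.inf_le'.mp h
    have hP' := Finset.mem_erase.mp hP
    exact hP'.1 (((hfin.mem_toFinset.mp hP'.2).1).eq_of_le hN.ne_top hPN)
  obtain ⟨a, haT, haN⟩ := SetLike.not_le_iff_exists.mp hTN
  have hrad : b * a ∈ (span {x}).radical := by
    rw [radical_eq_sInf, mem_sInf]
    rintro Q ⟨hxQ, hQ⟩
    have hxQ : x ∈ Q := hxQ (mem_span_singleton_self x)
    by_cases hQN : Q = N
    · exact Q.mul_mem_right a (hQN ▸ hbN)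
    · have hQmax := hQ.isMaximal fun h => hx (by rwa [h, mem_bot] at hxQ)
      have hQT : Q ∈ T := Finset.mem_erase.mpr ⟨hQN, hfin.mem_toFinset.mpr ⟨hQmax, hxQ⟩⟩
      exact Q.mul_mem_left b (Finset.inf_le (f := id) hQT haT)
  obtain ⟨n, hn⟩ := hrad
  refine ⟨b ^ n, fun h => hbM (hM.mem_of_pow_mem n h), a ^ n,
    fun h => haN (hN.isPrime.mem_of_pow_mem n h), ?_⟩
  rw [← mul_pow]
  exact mem_span_singleton.mp hn

theorem liesOnlyIn_of_localContraction_le [Ring.DimensionLEOne R] (hfc : FiniteCharacter R)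
    {I Z M : Ideal R} [M.IsMaximal] (hI : I ≠ ⊥) (hZ : I.localContraction M ≤ Z) :
    Z.LiesOnlyIn M := by
  intro N hN hZN
  by_contra hNM
  obtain ⟨x, hxI, hx⟩ := Submodule.exists_mem_ne_zero_of_ne_bot hI
  obtain ⟨s, hs, y, hyN, c, hc⟩ := exists_notMem_notMem_dvd_mul hx (hfc x hx)
    (IsMaximal.isPrime ‹_›) hN (Ne.symm hNM)
  refine hyN (hZN (hZ ?_))
  rw [mem_comap, IsLocalization.algebraMap_mem_map_algebraMap_iff M.primeCompl]
  exact ⟨s, hs, hc ▸ I.mul_mem_right c hxI⟩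

end Ideal

open Ideal in
theorem isSharpDomain_of_forall_isSharpAt [Ring.DimensionLEOne R] (hfc : FiniteCharacter R)
    (hloc : ∀ (M : Ideal R) [M.IsMaximal] (I A B : Ideal R),
      I ≠ ⊥ → A ≠ ⊥ → B ≠ ⊥ → A * B ≤ I → IsSharpAt M I A B) :
    IsSharpDomain R := by
  intro I A B hI hA hB hAB
  obtain ⟨x, hxI, hx⟩ := Submodule.exists_mem_ne_zero_of_ne_bot hI
  set T := (hfc x hx).toFinset
  have hT {M : Ideal R} : M ∈ T ↔ M.IsMaximal ∧ x ∈ M := (hfc x hx).mem_toFinset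
  choose! A' B' hAA' hBB' hIle hmap using fun M (hM : M ∈ T) =>
    have := (hT.mp hM).1; hloc M I A B hI hA hB hAB
  have hA' : ∀ M ∈ T, (A' M).LiesOnlyIn M := fun M hM =>
    have := (hT.mp hM).1; liesOnlyIn_of_localContraction_le hfc hI ((hIle M hM).trans inf_le_left)
  have hB' : ∀ M ∈ T, (B' M).LiesOnlyIn M := fun M hM =>
    have := (hT.mp hM).1; liesOnlyIn_of_localContraction_le hfc hI ((hIle M hM).trans inf_le_right)
  refine ⟨∏ M ∈ T, A' M, ∏ M ∈ T, B' M, le_prod_of_liesOnlyIn hA' hAA',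
    le_prod_of_liesOnlyIn hB' hBB', ?_⟩
  have hZ : ∀ M ∈ T, (A' M * B' M).LiesOnlyIn M := fun M hM => (hA' M hM).mul (hB' M hM)
  rw [← Finset.prod_mul_distrib]
  refine eq_of_localization_maximal fun N hN => ?_
  by_cases hNT : N ∈ T
  · rw [map_prod_of_liesOnlyIn hZ hNT, map_eq_map_of_localContraction_eq (hmap N hNT)]
  · rw [IsLocalization.AtPrime.map_eq_top_of_not_le _ fun h => hNT (hT.mpr ⟨hN, h hxI⟩),
      IsLocalization.AtPrime.map_eq_top_of_not_le _ (prod_not_le_of_liesOnlyIn hZ hN hNT)]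

open WithZero

/-- A real valuation on the fraction field of `R` whose valuation ring is `R_M`. -/
structure LocalValuation (R : Type*) [CommRing R] (M : Ideal R) where
  v : Valuation (FractionRing R) ℝᵐ⁰
  le_one_iff (x : FractionRing R) : v x ≤ 1 ↔
    ∃ a s : R, s ∉ M ∧ x * algebraMap R (FractionRing R) s = algebraMap R (FractionRing R) a

namespace LocalValuation

variable {M : Ideal R} (L : LocalValuation R M)

noncomputable def valueGroup : Set ℝ := {r | ∃ x, L.v x = exp r}

noncomputable def w : Valuation R ℝᵐ⁰ := L.v.comap (algebraMap R (FractionRing R))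

lemma w_apply (y : R) : L.w y = L.v (algebraMap R (FractionRing R) y) := rfl

lemma one_notMem (L : LocalValuation R M) : (1 : R) ∉ M := fun h => by
  obtain ⟨a, s, hs, -⟩ := (L.le_one_iff 0).mp (by simp)
  exact hs (M.eq_top_of_isUnit_mem h isUnit_one ▸ Submodule.mem_top)

lemma w_le_one (y : R) : L.w y ≤ 1 :=
  (L.le_one_iff _).mpr ⟨y, 1, L.one_notMem, by simp⟩

def leIdeal (t : ℝ) : Ideal R where
  carrier := {y | L.w y ≤ exp t}
  zero_mem' := by simp
  add_mem' ha hb := (L.w.map_add _ _).trans (max_le ha hb)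
  smul_mem' c y hy := by
    simpa using mul_le_of_le_one_of_le (L.w_le_one c) (show L.w y ≤ exp t from hy)

def ltIdeal (t : ℝ) : Ideal R where
  carrier := {y | L.w y < exp t}
  zero_mem' := by simp
  add_mem' ha hb := (L.w.map_add _ _).trans_lt (max_lt ha hb)
  smul_mem' c y hy := by
    simpa using mul_lt_of_le_one_of_lt (L.w_le_one c) (show L.w y < exp t from hy)

@[simp] lemma mem_leIdeal {t : ℝ} {y : R} : y ∈ L.leIdeal t ↔ L.w y ≤ exp t := Iff.rfl

@[simp] lemma mem_ltIdeal {t : ℝ} {y : R} : y ∈ L.ltIdeal t ↔ L.w y < exp t := Iff.rfl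

lemma leIdeal_mono : Monotone L.leIdeal := fun _ _ h _ hy => hy.trans (exp_le_exp.mpr h)

lemma ltIdeal_mono : Monotone L.ltIdeal := fun _ _ h _ hy => hy.trans_le (exp_le_exp.mpr h)

lemma ltIdeal_le_leIdeal (t : ℝ) : L.ltIdeal t ≤ L.leIdeal t :=
  fun y hy => show L.w y ≤ exp t from le_of_lt hy

/-- Only nonzero elements contribute, as `exp r ≠ 0`. -/
def valueSet (X : Ideal R) : Set ℝ := {r | ∃ x ∈ X, L.w x = exp r}

noncomputable def supValue (X : Ideal R) : ℝ := sSup (L.valueSet X)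

lemma valueSet_subset_valueGroup (X : Ideal R) : L.valueSet X ⊆ L.valueGroup :=
  fun _ ⟨_, _, hx⟩ => ⟨_, hx⟩

lemma nonpos_of_mem_valueSet {X : Ideal R} {r : ℝ} (hr : r ∈ L.valueSet X) : r ≤ 0 := by
  obtain ⟨x, -, hx⟩ := hr
  simpa [hx, ← exp_zero] using L.w_le_one x

lemma valueSet_bddAbove (X : Ideal R) : BddAbove (L.valueSet X) :=
  ⟨0, fun _ => L.nonpos_of_mem_valueSet⟩

lemma exists_w_le_mul_of_mem_mul {X Y : Ideal R} {z : R} (hz : z ∈ X * Y) :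
    ∃ x ∈ X, ∃ y ∈ Y, L.w z ≤ L.w x * L.w y := by
  refine Submodule.mul_induction_on hz (fun x hx y hy => ⟨x, hx, y, hy, (map_mul L.w x y).le⟩) ?_
  rintro z₁ z₂ ⟨x₁, hx₁, y₁, hy₁, h₁⟩ ⟨x₂, hx₂, y₂, hy₂, h₂⟩
  rcases le_total (L.w x₁ * L.w y₁) (L.w x₂ * L.w y₂) with h | h
  · exact ⟨x₂, hx₂, y₂, hy₂, (L.w.map_add _ _).trans (max_le (h₁.trans h) h₂)⟩
  · exact ⟨x₁, hx₁, y₁, hy₁, (L.w.map_add _ _).trans (max_le h₁ (h₂.trans h))⟩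

variable [IsDomain R]

@[simp] lemma w_eq_zero_iff {y : R} : L.w y = 0 ↔ y = 0 := by
  simp [w_apply]

lemma v_inv_le_one_iff {s : R} (hs : s ≠ 0) :
    L.v (algebraMap R (FractionRing R) s)⁻¹ ≤ 1 ↔ s ∉ M := by
  have hs' : algebraMap R (FractionRing R) s ≠ 0 := by simpa using hs
  rw [L.le_one_iff]
  constructor
  · rintro ⟨a, t, ht, hat⟩
    rw [inv_mul_eq_iff_eq_mul₀ hs', ← map_mul,
      (IsFractionRing.injective R (FractionRing R)).eq_iff] at hat
    exact fun hsM => ht (hat ▸ M.mul_mem_right a hsM)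
  · exact fun hsM => ⟨1, s, hsM, by simp [hs']⟩

lemma w_eq_one_iff {s : R} : L.w s = 1 ↔ s ∉ M := by
  rcases eq_or_ne s 0 with rfl | hs
  · simp
  rw [← L.v_inv_le_one_iff hs, map_inv₀, inv_le_one₀ (by simpa [pos_iff_ne_zero] using hs),
    ← w_apply]
  exact ⟨fun h => h.ge, fun h => (L.w_le_one s).antisymm h⟩

lemma w_lt_one_of_mem {m : R} (hm : m ∈ M) : L.w m < 1 :=
  (L.w_le_one m).lt_of_ne fun h => L.w_eq_one_iff.mp h hm

lemma exists_mul_eq_mul_of_w_le {y r : R} (hr : r ≠ 0) (h : L.w y ≤ L.w r) :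
    ∃ s ∉ M, ∃ a, s * y = r * a := by
  have hr' : algebraMap R (FractionRing R) r ≠ 0 := by simpa using hr
  obtain ⟨a, s, hs, has⟩ := (L.le_one_iff (algebraMap R _ y / algebraMap R _ r)).mp <| by
    rwa [map_div₀, div_le_one₀ (by simpa [pos_iff_ne_zero] using hr)]
  refine ⟨s, hs, a, IsFractionRing.injective R (FractionRing R) ?_⟩
  rw [div_mul_eq_mul_div, div_eq_iff hr'] at has
  simpa [mul_comm] using has

lemma exists_w_eq {t : ℝ} (ht : t ≤ 0) (htΓ : t ∈ L.valueGroup) : ∃ y : R, L.w y = exp t := by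
  obtain ⟨x, hx⟩ := htΓ
  obtain ⟨a, s, hs, has⟩ := (L.le_one_iff x).mp (by rwa [hx, ← exp_zero, exp_le_exp])
  refine ⟨a, ?_⟩
  rw [w_apply, ← has, map_mul, ← w_apply, L.w_eq_one_iff.mpr hs, mul_one, hx]

lemma sub_mem_valueGroup {r s : ℝ} (hr : r ∈ L.valueGroup) (hs : s ∈ L.valueGroup) :
    r - s ∈ L.valueGroup := by
  obtain ⟨x, hx⟩ := hr
  obtain ⟨y, hy⟩ := hs
  exact ⟨x / y, by rw [map_div₀, hx, hy, exp_sub]⟩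

lemma log_w_mem_valueSet {X : Ideal R} {x : R} (hx : x ∈ X) (hx0 : x ≠ 0) :
    log (L.w x) ∈ L.valueSet X :=
  ⟨x, hx, (exp_log (by simpa using hx0)).symm⟩

lemma valueSet_nonempty {X : Ideal R} (hX : X ≠ ⊥) : (L.valueSet X).Nonempty := by
  obtain ⟨x, hx, hx0⟩ := Submodule.exists_mem_ne_zero_of_ne_bot hX
  exact ⟨_, L.log_w_mem_valueSet hx hx0⟩

lemma supValue_nonpos {X : Ideal R} (hX : X ≠ ⊥) : L.supValue X ≤ 0 :=
  csSup_le (L.valueSet_nonempty hX) fun _ => L.nonpos_of_mem_valueSet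

lemma w_le_exp_supValue {X : Ideal R} {x : R} (hx : x ∈ X) : L.w x ≤ exp (L.supValue X) := by
  rcases eq_or_ne x 0 with rfl | hx0
  · simp
  rw [← log_le_iff_le_exp (by simpa using hx0)]
  exact le_csSup (L.valueSet_bddAbove X) (L.log_w_mem_valueSet hx hx0)

lemma w_lt_exp_supValue {X : Ideal R} (hX : L.supValue X ∉ L.valueSet X) {x : R} (hx : x ∈ X) :
    L.w x < exp (L.supValue X) :=
  (L.w_le_exp_supValue hx).lt_of_ne fun h => hX ⟨x, hx, h⟩

lemma supValue_add_supValue_le {I A B : Ideal R} (hA : A ≠ ⊥) (hB : B ≠ ⊥) (hAB : A * B ≤ I) :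
    L.supValue A + L.supValue B ≤ L.supValue I := by
  rw [supValue, supValue, ← csSup_add (L.valueSet_nonempty hA) (L.valueSet_bddAbove A)
    (L.valueSet_nonempty hB) (L.valueSet_bddAbove B)]
  refine csSup_le_csSup (L.valueSet_bddAbove I)
    ((L.valueSet_nonempty hA).add (L.valueSet_nonempty hB)) ?_
  rintro _ ⟨r, ⟨a, ha, hra⟩, s, ⟨b, hb, hsb⟩, rfl⟩
  exact ⟨a * b, hAB (Ideal.mul_mem_mul ha hb), by rw [map_mul, hra, hsb, exp_add]⟩

lemma supValue_mem_or_eq_univ (hΓ : IsCompleteRealSubgroup L.valueGroup) {X : Ideal R}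
    (hX : X ≠ ⊥) : L.supValue X ∈ L.valueSet X ∨ L.valueGroup = Set.univ :=
  hΓ.csSup_mem_or_eq_univ (L.valueSet_subset_valueGroup X) (L.valueSet_nonempty hX)
    (L.valueSet_bddAbove X)

variable [M.IsPrime]

lemma mem_localContraction_iff {X : Ideal R} {y : R} :
    y ∈ X.localContraction M ↔ ∃ x ∈ X, L.w y ≤ L.w x := by
  rw [Ideal.mem_comap, IsLocalization.algebraMap_mem_map_algebraMap_iff M.primeCompl]
  constructor
  · rintro ⟨s, hs, hsy⟩
    exact ⟨s * y, hsy, by rw [map_mul, L.w_eq_one_iff.mpr hs, one_mul]⟩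
  · rintro ⟨x, hx, hyx⟩
    rcases eq_or_ne x 0 with rfl | hx0
    · obtain rfl : y = 0 := by simpa using hyx
      exact ⟨1, M.primeCompl.one_mem, by simp⟩
    · obtain ⟨s, hs, a, hsa⟩ := L.exists_mul_eq_mul_of_w_le hx0 hyx
      exact ⟨s, hs, hsa ▸ X.mul_mem_right a hx⟩

lemma mem_localContraction_mul_iff {X Y : Ideal R} {y : R} :
    y ∈ (X * Y).localContraction M ↔ ∃ x ∈ X, ∃ z ∈ Y, L.w y ≤ L.w x * L.w z := by
  rw [L.mem_localContraction_iff]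
  constructor
  · rintro ⟨u, hu, hyu⟩
    obtain ⟨x, hx, z, hz, hu⟩ := L.exists_w_le_mul_of_mem_mul hu
    exact ⟨x, hx, z, hz, hyu.trans hu⟩
  · rintro ⟨x, hx, z, hz, hy⟩
    exact ⟨x * z, Ideal.mul_mem_mul hx hz, by rwa [map_mul]⟩

lemma localContraction_eq_leIdeal {X : Ideal R} (hX : L.supValue X ∈ L.valueSet X) :
    X.localContraction M = L.leIdeal (L.supValue X) := by
  obtain ⟨x₀, hx₀, hw⟩ := hX
  ext y
  rw [L.mem_localContraction_iff, mem_leIdeal]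
  exact ⟨fun ⟨x, hx, hyx⟩ => hyx.trans (L.w_le_exp_supValue hx), fun hy => ⟨x₀, hx₀, hw ▸ hy⟩⟩

lemma localContraction_eq_ltIdeal {X : Ideal R} (hX₀ : X ≠ ⊥)
    (hX : L.supValue X ∉ L.valueSet X) : X.localContraction M = L.ltIdeal (L.supValue X) := by
  ext y
  rw [L.mem_localContraction_iff, mem_ltIdeal]
  refine ⟨fun ⟨x, hx, hyx⟩ => hyx.trans_lt (L.w_lt_exp_supValue hX hx), fun hy => ?_⟩
  rcases eq_or_ne y 0 with rfl | hy0
  · exact ⟨0, X.zero_mem, le_rfl⟩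
  rw [← log_lt_iff_lt_exp (by simpa using hy0)] at hy
  obtain ⟨r, ⟨x, hx, hxr⟩, hlt⟩ := exists_lt_of_lt_csSup (L.valueSet_nonempty hX₀) hy
  refine ⟨x, hx, ?_⟩
  rw [hxr, ← log_le_iff_le_exp (by simpa using hy0)]
  exact hlt.le

lemma localContraction_leIdeal_mul_leIdeal {s t : ℝ} (hs : s ≤ 0) (ht : t ≤ 0)
    (hsΓ : s ∈ L.valueGroup) (htΓ : t ∈ L.valueGroup) :
    (L.leIdeal s * L.leIdeal t).localContraction M = L.leIdeal (s + t) := by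
  obtain ⟨x, hx⟩ := L.exists_w_eq hs hsΓ
  obtain ⟨z, hz⟩ := L.exists_w_eq ht htΓ
  ext y
  rw [L.mem_localContraction_mul_iff, mem_leIdeal, exp_add]
  refine ⟨fun ⟨x', hx', z', hz', hy⟩ => hy.trans (mul_le_mul' hx' hz'), fun hy => ?_⟩
  exact ⟨x, hx.le, z, hz.le, by rwa [hx, hz]⟩

lemma localContraction_leIdeal_mul_ltIdeal {s t : ℝ} (hs : s ≤ 0) (ht : t ≤ 0)
    (hΓ : L.valueGroup = Set.univ) :
    (L.leIdeal s * L.ltIdeal t).localContraction M = L.ltIdeal (s + t) := by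
  have hval (r : ℝ) (hr : r ≤ 0) : ∃ y : R, L.w y = exp r := L.exists_w_eq hr (hΓ ▸ trivial)
  obtain ⟨x, hx⟩ := hval s hs
  ext y
  rw [L.mem_localContraction_mul_iff, mem_ltIdeal, exp_add]
  refine ⟨fun ⟨x', hx', z', hz', hy⟩ => hy.trans_lt (mul_lt_mul_of_le_of_lt_of_nonneg_of_pos
    hx' hz' zero_le exp_pos), fun hy => ?_⟩
  rcases eq_or_ne y 0 with rfl | hy0
  · exact ⟨0, zero_mem _, 0, zero_mem _, by simp⟩
  have hwy : L.w y = exp (log (L.w y)) := (exp_log (L.w_eq_zero_iff.not.mpr hy0)).symm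
  rw [hwy, ← exp_add, exp_lt_exp] at hy
  obtain ⟨z, hz⟩ := hval (log (L.w y) - s) (by linarith)
  refine ⟨x, hx.le, z, ?_, ?_⟩
  · rw [mem_ltIdeal, hz, exp_lt_exp]
    linarith
  · rw [hx, hz, ← exp_add, add_sub_cancel, ← hwy]

variable {I A B : Ideal R}

theorem isSharpAt_of_supValue_mem (hI : L.supValue I ∈ L.valueSet I)
    (hAΓ : L.supValue A ∈ L.valueGroup) (hA : A ≠ ⊥) (hB : B ≠ ⊥) (hAB : A * B ≤ I) :
    Ideal.IsSharpAt M I A B := by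
  have hcΓ := L.valueSet_subset_valueGroup I hI
  have hc := L.nonpos_of_mem_valueSet hI
  have hαβ := L.supValue_add_supValue_le hA hB hAB
  have hα := L.supValue_nonpos hA
  have hβ := L.supValue_nonpos hB
  set c := L.supValue I
  set α := L.supValue A
  have hdΓ : max α c ∈ L.valueGroup := by rcases max_choice α c with h | h <;> rwa [h]
  have hd : max α c ≤ 0 := max_le hα hc
  refine ⟨L.leIdeal (max α c), L.leIdeal (c - max α c), fun a ha => (L.w_le_exp_supValue ha).trans
    (exp_le_exp.mpr (le_max_left α c)), fun b hb => (L.w_le_exp_supValue hb).trans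
      (exp_le_exp.mpr ?_), ?_, ?_⟩
  · rcases max_cases α c with ⟨h, -⟩ | ⟨h, -⟩ <;> linarith
  · rw [L.localContraction_eq_leIdeal hI]
    exact le_inf (L.leIdeal_mono (le_max_right α c)) (L.leIdeal_mono (by linarith))
  · rw [L.localContraction_leIdeal_mul_leIdeal hd (by linarith [le_max_right α c]) hdΓ
      (L.sub_mem_valueGroup hcΓ hdΓ), add_sub_cancel, L.localContraction_eq_leIdeal hI]

theorem isSharpAt_of_supValue_notMem (hI₀ : I ≠ ⊥) (hI : L.supValue I ∉ L.valueSet I)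
    (hΓ : L.valueGroup = Set.univ) (hA : A ≠ ⊥) (hB : B ≠ ⊥) (hAB : A * B ≤ I) :
    Ideal.IsSharpAt M I A B := by
  have hαβ := L.supValue_add_supValue_le hA hB hAB
  have hα := L.supValue_nonpos hA
  have hβ := L.supValue_nonpos hB
  have hc := L.supValue_nonpos hI₀
  have hlt {x : R} (hx : x ∈ I) := L.w_lt_exp_supValue hI hx
  unfold Ideal.IsSharpAt
  rw [L.localContraction_eq_ltIdeal hI₀ hI]
  set c := L.supValue I
  set α := L.supValue A
  by_cases hA' : c ≤ α ∧ α ∈ L.valueSet A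
  · obtain ⟨hcα, a₀, ha₀, hwa₀⟩ := hA'
    refine ⟨L.leIdeal α, L.ltIdeal (c - α), fun a ha => L.w_le_exp_supValue ha,
      fun b hb => ?_, le_inf ((L.ltIdeal_le_leIdeal c).trans (L.leIdeal_mono hcα))
        (L.ltIdeal_mono (by linarith)), ?_⟩
    · have hab := hlt (hAB (Ideal.mul_mem_mul ha₀ hb))
      rw [map_mul, hwa₀, ← sub_add_cancel c α, exp_add, mul_comm (exp (c - α))] at hab
      exact lt_of_mul_lt_mul_left' hab
    · rw [L.localContraction_leIdeal_mul_ltIdeal hα (by linarith) hΓ, add_sub_cancel]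
  · have hcd : c ≤ max α c := le_max_right α c
    have hd : max α c ≤ 0 := max_le hα hc
    refine ⟨L.ltIdeal (max α c), L.leIdeal (c - max α c), fun a ha => ?_,
      fun b hb => (L.w_le_exp_supValue hb).trans (exp_le_exp.mpr ?_), le_inf (L.ltIdeal_mono hcd)
        ((L.ltIdeal_le_leIdeal c).trans (L.leIdeal_mono (by linarith))), ?_⟩
    · rcases lt_or_ge α c with hαc | hcα
      · exact (L.w_le_exp_supValue ha).trans_lt (exp_lt_exp.mpr (hαc.trans_le hcd))
      · exact (L.w_lt_exp_supValue (fun h => hA' ⟨hcα, h⟩) ha).trans_le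
          (exp_le_exp.mpr (le_max_left α c))
    · rcases max_cases α c with ⟨h, -⟩ | ⟨h, -⟩ <;> linarith
    · rw [mul_comm, L.localContraction_leIdeal_mul_ltIdeal (by linarith) hd hΓ, sub_add_cancel]

theorem isSharpAt (hΓ : IsCompleteRealSubgroup L.valueGroup) (hI : I ≠ ⊥) (hA : A ≠ ⊥)
    (hB : B ≠ ⊥) (hAB : A * B ≤ I) : Ideal.IsSharpAt M I A B := by
  by_cases hc : L.supValue I ∈ L.valueSet I
  · refine L.isSharpAt_of_supValue_mem hc ?_ hA hB hAB
    rcases L.supValue_mem_or_eq_univ hΓ hA with h | h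
    · exact L.valueSet_subset_valueGroup A h
    · exact h ▸ trivial
  · exact L.isSharpAt_of_supValue_notMem hI hc
      ((L.supValue_mem_or_eq_univ hΓ hI).resolve_left hc) hA hB hAB

end LocalValuation

theorem Ring.DimensionLEOne.of_localValuation [IsDomain R]
    (h : ∀ M : Ideal R, M.IsMaximal → Nonempty (LocalValuation R M)) :
    Ring.DimensionLEOne R where
  maximalOfPrime {P} hP₀ hP := by
    obtain ⟨M, hM, hPM⟩ := P.exists_le_maximal hP.ne_top
    obtain ⟨L⟩ := h M hM
    suffices M ≤ P by rwa [hPM.antisymm this]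
    intro m hm
    obtain ⟨q, hqP, hq⟩ := Submodule.exists_mem_ne_zero_of_ne_bot hP₀
    obtain ⟨n, hn⟩ := exists_pow_lt₀ (L.w_lt_one_of_mem hm) (Units.mk0 (L.w q) (by simpa using hq))
    obtain ⟨s, hs, a, hsa⟩ := L.exists_mul_eq_mul_of_w_le (y := m ^ n) hq (by simpa using hn.le)
    have hsm : s * m ^ n ∈ P := hsa ▸ P.mul_mem_right a hqP
    exact hP.mem_of_pow_mem n ((hP.mem_or_mem hsm).resolve_left fun h' => hs (hPM h'))

end

/-- If `D` has finite character and for every maximal ideal `M` the localization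
`D_M` is a valuation domain (the ring of integers of a real-valued valuation `v` on
the fraction field) whose value group is a complete subgroup of `ℝ`, then `D` is sharp. -/
theorem finiteCharacter_valuation_sharp (R : Type*) [CommRing R] [IsDomain R]
    (hfc : FiniteCharacter R)
    (hval : ∀ M : Ideal R, M.IsMaximal →
      ∃ v : Valuation (FractionRing R) (WithZero (Multiplicative ℝ)),
        (∀ x : FractionRing R, v x ≤ 1 ↔
          ∃ a s : R, s ∉ M ∧ x * algebraMap R (FractionRing R) s =
            algebraMap R (FractionRing R) a) ∧
        IsCompleteRealSubgroup
          {r : ℝ | ∃ x : FractionRing R, v x = (Multiplicative.ofAdd r : Multiplicative ℝ)}) :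
    IsSharpDomain R := by
  have : Ring.DimensionLEOne R := .of_localValuation fun M hM =>
    let ⟨v, hv, _⟩ := hval M hM
    ⟨⟨v, hv⟩⟩
  refine isSharpDomain_of_forall_isSharpAt hfc fun M hM I A B hI hA hB hAB => ?_
  obtain ⟨v, hv, hΓ⟩ := hval M hM
  exact (LocalValuation.mk v hv).isSharpAt hΓ hI hA hB hAB
end

section
/- If D is a countable pseudo-Dedekind Prüfer domain, then D is of finite character. -/
/-- A *Prüfer domain* is a domain in which every nonzero finitely generated ideal
is invertible. -/
def IsPruferDomain (R : Type*) [CommRing R] [IsDomain R] : Prop :=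
  ∀ I : Ideal R, I.FG → I ≠ ⊥ →
    IsUnit (I : FractionalIdeal (nonZeroDivisors R) (FractionRing R))

open Function
open scoped nonZeroDivisors

namespace Ideal

variable {R : Type*} [CommRing R]

theorem exists_mem_forall_notMem_of_isMaximal {M : Ideal R} (hM : M.IsMaximal)
    {U : Set (Ideal R)} (hU : U.Finite) (hUmax : ∀ N ∈ U, N.IsMaximal) (hMU : M ∉ U) :
    ∃ c ∈ M, ∀ N ∈ U, c ∉ N := by
  have hnot : ¬ (M : Set R) ⊆ ⋃ N ∈ U, (N : Set R) := by
    rwa [subset_iUnion_iff_mem_of_isMaximal_of_finite hU M M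
      (fun N hN _ _ => (hUmax N hN).isPrime) hM.ne_top hM.ne_top]
  obtain ⟨c, hcM, hcU⟩ := Set.not_subset.1 hnot
  simp only [Set.mem_iUnion, SetLike.mem_coe, not_exists] at hcU
  exact ⟨c, hcM, hcU⟩

theorem pairwise_isCoprime_iterate {α : Type*} [Preorder α] {f : α → α} (hf : ∀ a, a ≤ f a)
    (J : α → Ideal R) (hJ : ∀ a b, f a ≤ b → J a ⊔ J b = ⊤) (a : α) :
    Pairwise (IsCoprime on fun n => J (f^[n] a)) := by
  have hlt : ∀ {m n : ℕ}, m < n → J (f^[m] a) ⊔ J (f^[n] a) = ⊤ := fun {m n} hmn => by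
    apply hJ
    rw [← iterate_succ_apply' f m a]
    exact monotone_iterate_of_id_le hf hmn a
  intro m n hmn
  rcases hmn.lt_or_gt with h | h
  · exact isCoprime_iff_sup_eq.2 (hlt h)
  · exact (isCoprime_iff_sup_eq.2 (hlt h)).symm

structure IsComaximalFGSeq (x : R) (I : ℕ → Ideal R) : Prop where
  fg : ∀ n, (I n).FG
  mem : ∀ n, x ∈ I n
  ne_top : ∀ n, I n ≠ ⊤
  pairwise_isCoprime : Pairwise (IsCoprime on I)

theorem exists_isComaximalFGSeq_of_isMaximal {x : R} {M : Ideal R} (hM : M.IsMaximal)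
    (hxM : x ∈ M)
    (h : ∀ H : Ideal R, H.FG → x ∈ H → H ≤ M → {N : Ideal R | N.IsMaximal ∧ H ≤ N}.Infinite) :
    ∃ I, IsComaximalFGSeq x I := by
  let α := {H : Ideal R // H.FG ∧ x ∈ H ∧ H ≤ M}
  -- Split the state `H` along a maximal `N ≠ M` over it: for `a + b = 1` with `a ∈ M`, `b ∈ N`,
  -- emit `H + (b) ≤ N` and continue with `H + (a) ≤ M`, which all later ideals contain.
  have step : ∀ H : α, ∃ H' : α, ∃ J : Ideal R,
      H ≤ H' ∧ H.1 ≤ J ∧ J.FG ∧ J ≠ ⊤ ∧ H'.1 ⊔ J = ⊤ := by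
    rintro ⟨H, hfg, hxH, hHM⟩
    obtain ⟨N, ⟨hN, hHN⟩, hNM⟩ := ((h H hfg hxH hHM).sdiff (Set.finite_singleton M)).nonempty
    have hone : (1 : R) ∈ M ⊔ N := by
      rw [hM.coprime_of_ne hN (Ne.symm hNM)]
      exact Submodule.mem_top
    obtain ⟨a, ha, b, hb, hab⟩ := Submodule.mem_sup.1 hone
    refine ⟨⟨H ⊔ span {a}, Submodule.FG.sup hfg (Submodule.fg_span_singleton a),
        mem_sup_left hxH, sup_le hHM ((span_singleton_le_iff_mem _).2 ha)⟩, H ⊔ span {b},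
        (le_sup_left : H ≤ _), le_sup_left, Submodule.FG.sup hfg (Submodule.fg_span_singleton b),
        ne_top_of_le_ne_top hN.ne_top (sup_le hHN ((span_singleton_le_iff_mem _).2 hb)), ?_⟩
    rw [eq_top_iff_one, ← hab]
    exact add_mem (mem_sup_left (mem_sup_right (mem_span_singleton_self a)))
      (mem_sup_right (mem_sup_right (mem_span_singleton_self b)))
  choose f J hf hJ hfg hne hcop using step
  let H₀ : α := ⟨span {x}, Submodule.fg_span_singleton x, mem_span_singleton_self x,
    (span_singleton_le_iff_mem _).2 hxM⟩
  refine ⟨fun n => J (f^[n] H₀), ⟨fun n => hfg _, fun n => hJ _ (f^[n] H₀).2.2.1,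
    fun n => hne _, pairwise_isCoprime_iterate hf J (fun a b hab => ?_) H₀⟩⟩
  rw [eq_top_iff, ← hcop a, sup_comm]
  exact sup_le_sup_left (le_trans hab (hJ b)) _

theorem exists_isComaximalFGSeq_of_forall_isMaximal {x : R}
    (hx : {M : Ideal R | M.IsMaximal ∧ x ∈ M}.Infinite)
    (h : ∀ M : Ideal R, M.IsMaximal → x ∈ M →
      ∃ H : Ideal R, H.FG ∧ x ∈ H ∧ H ≤ M ∧ {N : Ideal R | N.IsMaximal ∧ H ≤ N}.Finite) :
    ∃ I, IsComaximalFGSeq x I := by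
  let α := {U : Set (Ideal R) // U.Finite ∧ ∀ N ∈ U, N.IsMaximal}
  -- The state records the maximal ideals over the ideals emitted so far; each new ideal lies in a
  -- fresh maximal ideal and, by prime avoidance, in none of the recorded ones.
  have step : ∀ U : α, ∃ U' : α, ∃ J : Ideal R, U ≤ U' ∧ J.FG ∧ x ∈ J ∧ J ≠ ⊤ ∧
      {N : Ideal R | N.IsMaximal ∧ J ≤ N} ⊆ U'.1 ∧ ∀ N ∈ U.1, ¬ J ≤ N := by
    rintro ⟨U, hUfin, hUmax⟩
    obtain ⟨M, ⟨hM, hxM⟩, hMU⟩ := (hx.sdiff hUfin).nonempty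
    obtain ⟨H, hfg, hxH, hHM, hHfin⟩ := h M hM hxM
    obtain ⟨c, hcM, hcU⟩ := exists_mem_forall_notMem_of_isMaximal hM hUfin hUmax hMU
    refine ⟨⟨U ∪ {N | N.IsMaximal ∧ H ≤ N}, hUfin.union hHfin,
        fun N hN => hN.elim (hUmax N) And.left⟩, H ⊔ span {c}, Set.subset_union_left,
        Submodule.FG.sup hfg (Submodule.fg_span_singleton c), mem_sup_left hxH,
        ne_top_of_le_ne_top hM.ne_top (sup_le hHM ((span_singleton_le_iff_mem _).2 hcM)),
        fun N hN => Or.inr ⟨hN.1, le_sup_left.trans hN.2⟩,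
        fun N hN hle => hcU N hN (hle (mem_sup_right (mem_span_singleton_self c)))⟩
  choose f J hf hfg hxJ hne hcover havoid using step
  let U₀ : α := ⟨∅, Set.finite_empty, fun _ h => h.elim⟩
  refine ⟨fun n => J (f^[n] U₀), ⟨fun n => hfg _, fun n => hxJ _, fun n => hne _,
    pairwise_isCoprime_iterate hf J (fun a b hab => ?_) U₀⟩⟩
  by_contra hab'
  obtain ⟨N, hN, hle⟩ := exists_le_maximal _ hab'
  exact havoid b N (hab (hcover a ⟨hN, le_sup_left.trans hle⟩)) (le_sup_right.trans hle)

theorem exists_isComaximalFGSeq {x : R} (hx : {M : Ideal R | M.IsMaximal ∧ x ∈ M}.Infinite) :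
    ∃ I, IsComaximalFGSeq x I := by
  by_cases h : ∃ M : Ideal R, M.IsMaximal ∧ x ∈ M ∧
      ∀ H : Ideal R, H.FG → x ∈ H → H ≤ M → {N : Ideal R | N.IsMaximal ∧ H ≤ N}.Infinite
  · obtain ⟨M, hM, hxM, hM'⟩ := h
    exact exists_isComaximalFGSeq_of_isMaximal hM hxM hM'
  · push Not at h
    exact exists_isComaximalFGSeq_of_forall_isMaximal hx h

end Ideal

namespace FractionalIdeal

theorem countable_setOf_isUnit {R P : Type*} [CommRing R] {S : Submonoid R} [CommRing P]
    [Algebra R P] [Countable P] : {J : FractionalIdeal S P | IsUnit J}.Countable := by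
  have hfg : {N : Submodule R P | N.FG}.Countable :=
    (Set.countable_range fun s : Finset P => Submodule.span R (s : Set P)).mono fun _ h => h
  exact (hfg.preimage coeToSubmodule_injective).mono fun J hJ => fg_of_isUnit J hJ

variable {R K : Type*} [CommRing R] [Field K] [Algebra R K] [IsFractionRing R K]

theorem le_coeIdeal_biInf_iff {ι : Type*} {I : ι → Ideal R} {S : Set ι} (hS : S.Nonempty)
    {L : FractionalIdeal R⁰ K} : L ≤ ((⨅ i ∈ S, I i : Ideal R) : FractionalIdeal R⁰ K) ↔
      ∀ i ∈ S, L ≤ (I i : FractionalIdeal R⁰ K) := by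
  refine ⟨fun h i hi => h.trans ((coeIdeal_le_coeIdeal K).2 (biInf_le I hi)), fun h => ?_⟩
  obtain ⟨i₀, hi₀⟩ := hS
  obtain ⟨W, rfl⟩ := le_one_iff_exists_coeIdeal.1 ((h i₀ hi₀).trans coeIdeal_le_one)
  exact (coeIdeal_le_coeIdeal K).2 (le_iInf₂ fun i hi => (coeIdeal_le_coeIdeal K).1 (h i hi))

variable [IsDomain R] {I J : FractionalIdeal R⁰ K}

theorem inv_inv_of_isUnit_s18 (hJ : IsUnit J) : J⁻¹⁻¹ = J :=
  (right_inverse_eq K J⁻¹ J (by rw [mul_comm, (mul_inv_cancel_iff_isUnit K).2 hJ])).symm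

theorem one_le_inv_of_le_one_s18 (hI : I ≤ 1) (hI0 : I ≠ 0) : 1 ≤ I⁻¹ := by
  rw [inv_eq, le_div_iff_mul_le hI0, one_mul]
  exact hI

theorem le_inv_inv_of_le_one (hI : I ≤ 1) : I ≤ I⁻¹⁻¹ := by
  rcases eq_or_ne I 0 with rfl | hI0
  · exact zero_le _
  have hinv : I⁻¹ ≠ 0 := fun h => one_ne_zero (le_bot_iff.1 (h ▸ one_le_inv_of_le_one_s18 hI hI0))
  rw [inv_eq (I := I⁻¹), le_div_iff_mul_le hinv]
  exact mul_one_div_le_one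

theorem inv_inv_le_iff_of_isUnit (hI : I ≤ 1) (hJ : IsUnit J) : I⁻¹⁻¹ ≤ J ↔ I ≤ J := by
  refine ⟨(le_inv_inv_of_le_one hI).trans, fun hIJ => ?_⟩
  rcases eq_or_ne I 0 with rfl | hI0
  · simp [inv_zero']
  have hJ0 : J ≠ 0 := ne_bot_of_le_ne_bot hI0 hIJ
  have hJinv : J⁻¹ ≠ 0 := fun h => zero_ne_one <| by
    rw [← (mul_inv_cancel_iff_isUnit K).2 hJ, h, mul_zero]
  have hanti : J⁻¹ ≤ I⁻¹ := inv_anti_mono hI0 hJ0 hIJ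
  calc I⁻¹⁻¹ ≤ J⁻¹⁻¹ := inv_anti_mono hJinv (ne_bot_of_le_ne_bot hJinv hanti) hanti
    _ = J := inv_inv_of_isUnit_s18 hJ

theorem eq_one_of_mul_inv_le_self {V P : FractionalIdeal R⁰ K} (hV : IsUnit V) (hP : IsUnit P)
    (hP1 : P ≤ 1) (h : V * P⁻¹ ≤ V) : P = 1 := by
  have hPinv : P⁻¹ ≤ 1 :=
    calc P⁻¹ = V⁻¹ * (V * P⁻¹) := by
          rw [← mul_assoc, mul_comm V⁻¹, (mul_inv_cancel_iff_isUnit K).2 hV, one_mul]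
      _ ≤ V⁻¹ * V := mul_le_mul_right h _
      _ = 1 := by rw [mul_comm, (mul_inv_cancel_iff_isUnit K).2 hV]
  refine le_antisymm hP1 ?_
  calc 1 = P * P⁻¹ := ((mul_inv_cancel_iff_isUnit K).2 hP).symm
    _ ≤ P * 1 := mul_le_mul_right hPinv _
    _ = P := mul_one P

end FractionalIdeal

theorem IsLocalization.countable {R : Type*} [CommRing R] [Countable R] (M : Submonoid R)
    (S : Type*) [CommRing S] [Algebra R S] [IsLocalization M S] : Countable S :=
  (IsLocalization.mk'_surjective M).countable

section VClosure

open FractionalIdeal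

variable {R K ι : Type*} [CommRing R] [IsDomain R] [Field K] [Algebra R K] [IsFractionRing R K]
  {I : ι → Ideal R}

theorem mem_of_inv_inv_biInf_le (hI : ∀ i, IsUnit (I i : FractionalIdeal R⁰ K))
    (hcop : Pairwise (IsCoprime on I)) {S : Set ι}
    (hS : IsUnit ((⨅ j ∈ S, I j : Ideal R) : FractionalIdeal R⁰ K)⁻¹⁻¹) {i : ι} (hi : I i ≠ ⊤)
    (hle : ((⨅ j ∈ S, I j : Ideal R) : FractionalIdeal R⁰ K)⁻¹⁻¹ ≤ I i) : i ∈ S := by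
  set V := ((⨅ j ∈ S, I j : Ideal R) : FractionalIdeal R⁰ K)⁻¹⁻¹
  by_contra hiS
  have hIi : (I i : FractionalIdeal R⁰ K) ≠ 1 := fun h => hi (by simpa using h)
  rcases S.eq_empty_or_nonempty with rfl | hSne
  · refine hIi (le_antisymm coeIdeal_le_one ?_)
    simpa [V] using hle
  have hVle : ∀ j ∈ S, V ≤ I j := fun j hj =>
    (inv_inv_le_iff_of_isUnit coeIdeal_le_one (hI j)).2
      ((coeIdeal_le_coeIdeal K).2 (biInf_le I hj))
  -- Comaximality turns `V ≤ I j ⊓ I i` into `V ≤ I j * I i`, so `I i` can be divided out.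
  have hdiv : ∀ j ∈ S, V * (I i : FractionalIdeal R⁰ K)⁻¹ ≤ I j := by
    intro j hj
    have hVji : V ≤ (I j : FractionalIdeal R⁰ K) * I i := by
      have hji : j ≠ i := fun h => hiS (h ▸ hj)
      rw [← coeIdeal_mul, Ideal.mul_eq_inf_of_coprime (hcop hji).sup_eq, ← iInf_pair]
      refine (le_coeIdeal_biInf_iff (Set.insert_nonempty j {i})).2 ?_
      rintro k (rfl | rfl)
      exacts [hVle k hj, hle]
    calc V * (I i : FractionalIdeal R⁰ K)⁻¹ ≤ I j * I i * (I i : FractionalIdeal R⁰ K)⁻¹ :=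
          mul_le_mul_left hVji _
      _ = I j := by rw [mul_assoc, (mul_inv_cancel_iff_isUnit K).2 (hI i), mul_one]
  have hself : V * (I i : FractionalIdeal R⁰ K)⁻¹ ≤ V :=
    ((le_coeIdeal_biInf_iff hSne).2 hdiv).trans (le_inv_inv_of_le_one coeIdeal_le_one)
  exact hIi (eq_one_of_mul_inv_le_self hS (hI i) coeIdeal_le_one hself)

theorem injective_inv_inv_biInf (hI : ∀ i, IsUnit (I i : FractionalIdeal R⁰ K))
    (htop : ∀ i, I i ≠ ⊤) (hcop : Pairwise (IsCoprime on I))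
    (hS : ∀ S : Set ι, IsUnit ((⨅ j ∈ S, I j : Ideal R) : FractionalIdeal R⁰ K)⁻¹⁻¹) :
    Injective fun S : Set ι => ((⨅ j ∈ S, I j : Ideal R) : FractionalIdeal R⁰ K)⁻¹⁻¹ := by
  have hle_iff : ∀ S i, ((⨅ j ∈ S, I j : Ideal R) : FractionalIdeal R⁰ K)⁻¹⁻¹ ≤ I i ↔ i ∈ S :=
    fun S i => ⟨mem_of_inv_inv_biInf_le hI hcop (hS S) (htop i), fun hi =>
      (inv_inv_le_iff_of_isUnit coeIdeal_le_one (hI i)).2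
        ((coeIdeal_le_coeIdeal K).2 (biInf_le I hi))⟩
  intro S T hST
  ext i
  rw [← hle_iff S, ← hle_iff T]
  exact iff_of_eq (congrArg (· ≤ _) hST)

end VClosure

theorem countable_pseudoDedekind_prufer_finiteCharacter (R : Type*) [CommRing R]
    [IsDomain R] [Countable R] (hPD : IsPseudoDedekind R) (hPr : IsPruferDomain R) :
    FiniteCharacter R := by
  intro x hx
  by_contra hinf
  obtain ⟨I, hI⟩ := Ideal.exists_isComaximalFGSeq hinf
  have hne_bot : ∀ S : Set ℕ, (⨅ n ∈ S, I n) ≠ ⊥ := fun S =>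
    (Submodule.ne_bot_iff _).2 ⟨x, by simp [hI.mem], hx⟩
  have hunit : ∀ n, IsUnit (I n : FractionalIdeal R⁰ (FractionRing R)) := fun n =>
    hPr _ (hI.fg n) ((Submodule.ne_bot_iff _).2 ⟨x, hI.mem n, hx⟩)
  have hinj := injective_inv_inv_biInf hunit hI.ne_top hI.pairwise_isCoprime fun S =>
    hPD _ (hne_bot S)
  have := IsLocalization.countable R⁰ (FractionRing R)
  have : Countable (Set ℕ) := Set.countable_univ_iff.1 <|
    (FractionalIdeal.countable_setOf_isUnit.preimage hinj).mono fun S _ => hPD _ (hne_bot S)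
  obtain ⟨f, hf⟩ := Countable.exists_injective_nat (Set ℕ)
  exact cantor_injective f hf
end
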